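/- arXiv:1001.0432 — 7 statements merged into one kernel-verified Lean document; each statement's English description precedes it below -/
import Mathlib

section
/- Let G be a finite subgroup of GL_n(ℂ), S its set of reflections, and c : S → ℂ conjugation-invariant. For every a ∈ ℂ^n and every linear form x ∈ (ℂ^n)*, the commutator of the Dunkl operator D_a with the operator M_x of multiplication by x satisfies, as endomorphisms of ℂ(x_1,…,x_n): [D_a, M_x] = x(a)·Id − Σ_{s∈S} c_s · α_s(a) · x(α_s^∨) · ρ(s), where ρ(s) denotes the action of s on rational functions. Moreover, for every g ∈ G one has ρ(g) ∘ D_a ∘ ρ(g)^{-1} = D_{ga}. -/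
/-! For `[D_a, M_x]`: the derivation part of `D_a` contributes `∂_a x = x(a)`, while for a
reflection `s` the divided difference `f ↦ (f - s·f)/α_s` has commutator `f ↦ ((x - s·x)/α_s) · s·f`
with `M_x`. Since `1 - s` has rank one, `x - s·x` is a multiple of `α_s`, and pairing with `α_s^∨`
identifies it as `(1 - λ_s) x(α_s^∨)/2 · α_s`.

For the equivariance, `ρ(g) ∂_a ρ(g)⁻¹` is again a derivation and agrees with `∂_{ga}` on the
coordinates, hence on all of `ℂ(x₁,…,xₙ)`. Conjugation by `ρ(g)` turns the divided difference of `s`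
into that of `gsg⁻¹` with root `α_s ∘ g⁻¹`; this is an eigenvector of `(gsg⁻¹)⁻¹` for `λ_s`, hence
a multiple `μ α_{gsg⁻¹}` with `λ_{gsg⁻¹} = λ_s`, and `μ` cancels between `α_s(a)` and `1/α_s`.
-/

open MvPolynomial

noncomputable section

/-- The matrix underlying an element of a subgroup of `GL_n(ℂ)`. -/
def matOf {n : ℕ} {G : Subgroup (Matrix.GeneralLinearGroup (Fin n) ℂ)} (g : G) :
    Matrix (Fin n) (Fin n) ℂ :=
  ((g : Matrix.GeneralLinearGroup (Fin n) ℂ) : Matrix (Fin n) (Fin n) ℂ)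

/-- The linear polynomial `Σᵢ aᵢ xᵢ` with coefficient vector `a`. -/
def linForm {n : ℕ} (a : Fin n → ℂ) : MvPolynomial (Fin n) ℂ :=
  ∑ i, MvPolynomial.C (a i) * MvPolynomial.X i

/-- The Dunkl operator `D_a` on the field `K = ℂ(x₁,…,xₙ)`:
`D_a f = ∂_a f − Σ_{s ∈ S} (2 c_s α_s(a)/(1 − λ_s)) · (f − s·f)/α_s`. -/
def dunklOp (n : ℕ) (K : Type) [Field K] [Algebra ℂ K]
    [Algebra (MvPolynomial (Fin n) ℂ) K] [IsScalarTower ℂ (MvPolynomial (Fin n) ℂ) K]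
    {G : Subgroup (Matrix.GeneralLinearGroup (Fin n) ℂ)}
    (S : Finset G) (c lam : G → ℂ) (α : G → Fin n → ℂ)
    (ρ : G →* (K ≃ₐ[ℂ] K)) (pd : Fin n → Derivation ℂ K K)
    (a : Fin n → ℂ) : K →ₗ[ℂ] K :=
  (∑ i, a i • (pd i).toLinearMap)
    - ∑ s ∈ S, (2 * c s * (∑ i, α s i * a i) / (1 - lam s)) •
        ((LinearMap.mulLeft ℂ
            ((algebraMap (MvPolynomial (Fin n) ℂ) K (linForm (α s)))⁻¹)).comp
          (LinearMap.id - (ρ s).toLinearMap))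

/-- Multiplication by the linear form with coefficient vector `ξ`,
as a `ℂ`-linear endomorphism of `K`. -/
def mulLinForm (n : ℕ) (K : Type) [Field K] [Algebra ℂ K]
    [Algebra (MvPolynomial (Fin n) ℂ) K] [IsScalarTower ℂ (MvPolynomial (Fin n) ℂ) K]
    (ξ : Fin n → ℂ) : K →ₗ[ℂ] K :=
  LinearMap.mulLeft ℂ (algebraMap (MvPolynomial (Fin n) ℂ) K (linForm ξ))

namespace Matrix

variable {ι F : Type*} [Fintype ι] [DecidableEq ι] [Field F]

theorem rank_one_sub_inv (g : GL ι F) :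
    (1 - ((g⁻¹ : GL ι F) : Matrix ι ι F)).rank = (1 - (g : Matrix ι ι F)).rank := by
  have hfac : 1 - ((g⁻¹ : GL ι F) : Matrix ι ι F)
      = ((g⁻¹ : GL ι F) : Matrix ι ι F) * ((1 - (g : Matrix ι ι F)) * (-1 : GL ι F)) := by
    simp [mul_sub]
  rw [hfac, rank_mul_eq_right_of_isUnit_det _ _ ((isUnit_iff_isUnit_det _).mp (Units.isUnit _)),
    rank_mul_eq_left_of_isUnit_det _ _ ((isUnit_iff_isUnit_det _).mp (Units.isUnit _))]

theorem rank_one_sub_conj (g h : GL ι F) :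
    (1 - ((g * h * g⁻¹ : GL ι F) : Matrix ι ι F)).rank = (1 - (h : Matrix ι ι F)).rank := by
  have hfac : 1 - ((g * h * g⁻¹ : GL ι F) : Matrix ι ι F)
      = (g : Matrix ι ι F) * (1 - (h : Matrix ι ι F)) * ((g⁻¹ : GL ι F) : Matrix ι ι F) := by
    simp [mul_sub, sub_mul]
  rw [hfac, rank_mul_eq_left_of_isUnit_det _ _ ((isUnit_iff_isUnit_det _).mp (Units.isUnit _)),
    rank_mul_eq_right_of_isUnit_det _ _ ((isUnit_iff_isUnit_det _).mp (Units.isUnit _))]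

theorem vecMul_one_sub_of_vecMul_eq_smul {M : Matrix ι ι F} {w : ι → F} {l : F}
    (hwM : w ᵥ* M = l • w) : w ᵥ* (1 - M) = (1 - l) • w := by
  rw [vecMul_sub, vecMul_one, hwM, sub_smul, one_smul]

theorem exists_vecMul_one_sub_eq_smul {M : Matrix ι ι F} (hM : (1 - M).rank = 1)
    {α : ι → F} {l : F} (hα : α ≠ 0) (hl : l ≠ 1) (hαM : α ᵥ* M = l • α) (w : ι → F) :
    ∃ μ : F, w ᵥ* (1 - M) = μ • α := by
  set V := LinearMap.range (1 - M)ᵀ.mulVecLin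
  have hV : Module.finrank F V = 1 := by rw [← hM, ← rank_transpose]; rfl
  have hmem (v : ι → F) : v ᵥ* (1 - M) ∈ V := ⟨v, mulVec_transpose _ _⟩
  have hαV : α = (1 - l)⁻¹ • (α ᵥ* (1 - M)) := by
    rw [vecMul_one_sub_of_vecMul_eq_smul hαM, smul_smul,
      inv_mul_cancel₀ (sub_ne_zero.mpr hl.symm), one_smul]
  have hα' : (⟨α, hαV ▸ V.smul_mem _ (hmem α)⟩ : V) ≠ 0 := fun h => hα congr($h.1)
  obtain ⟨μ, hμ⟩ := (finrank_eq_one_iff_of_nonzero' _ hα').mp hV ⟨_, hmem w⟩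
  exact ⟨μ, congr($hμ.1).symm⟩

theorem eq_smul_of_vecMul_eq_smul {M : Matrix ι ι F} (hM : (1 - M).rank = 1)
    {α : ι → F} {l : F} (hα : α ≠ 0) (hl : l ≠ 1) (hαM : α ᵥ* M = l • α)
    {w : ι → F} {l' : F} (hl' : l' ≠ 1) (hwM : w ᵥ* M = l' • w) :
    ∃ μ : F, w = μ • α := by
  obtain ⟨μ, hμ⟩ := exists_vecMul_one_sub_eq_smul hM hα hl hαM w
  refine ⟨(1 - l')⁻¹ * μ, ?_⟩
  rw [vecMul_one_sub_of_vecMul_eq_smul hwM] at hμ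
  rw [mul_smul, ← hμ, smul_smul, inv_mul_cancel₀ (sub_ne_zero.mpr hl'.symm), one_smul]

theorem vecMul_one_sub_eq_smul {M : Matrix ι ι F} (hM : (1 - M).rank = 1)
    {α αv : ι → F} {l : F} (hα : α ≠ 0) (hl : l ≠ 1) (hαM : α ᵥ* M = l • α)
    (hMαv : M *ᵥ αv = l • αv) (hααv : α ⬝ᵥ αv ≠ 0) (w : ι → F) :
    w ᵥ* (1 - M) = ((1 - l) * (w ⬝ᵥ αv) / (α ⬝ᵥ αv)) • α := by
  obtain ⟨μ, hμ⟩ := exists_vecMul_one_sub_eq_smul hM hα hl hαM w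
  have hpair : μ * (α ⬝ᵥ αv) = (1 - l) * (w ⬝ᵥ αv) := by
    rw [← smul_eq_mul, ← smul_dotProduct, ← hμ, ← dotProduct_mulVec, sub_mulVec, one_mulVec,
      hMαv, dotProduct_sub, dotProduct_smul, smul_eq_mul, sub_mul, one_mul]
  rw [hμ, ← hpair, mul_div_cancel_right₀ _ hααv]

theorem mulVec_inv_eq_smul (g : GL ι F) {v : ι → F} {l : F} (hv : v ≠ 0)
    (hgv : (g : Matrix ι ι F) *ᵥ v = l⁻¹ • v) : ((g⁻¹ : GL ι F) : Matrix ι ι F) *ᵥ v = l • v := by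
  have hback : v = l⁻¹ • (((g⁻¹ : GL ι F) : Matrix ι ι F) *ᵥ v) := by
    rw [← mulVec_smul, ← hgv, mulVec_mulVec, ← Units.val_mul, inv_mul_cancel, Units.val_one,
      one_mulVec]
  have hl : l ≠ 0 := by
    rintro rfl
    apply hv
    simpa using hback
  rw [hback, smul_smul, mul_inv_cancel₀ hl, one_smul, ← hback]

end Matrix

namespace Derivation

variable {R A : Type*} [CommRing R] [CommRing A] [Algebra R A]

theorem mul_mulLeft_sub_mulLeft_mul (D : Derivation R A A) (u : A) :
    (D : Module.End R A) * LinearMap.mulLeft R u - LinearMap.mulLeft R u * D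
      = LinearMap.mulLeft R (D u) := by
  ext f
  simp only [LinearMap.sub_apply, Module.End.mul_apply, LinearMap.mulLeft_apply, coeFn_coe,
    leibniz, smul_eq_mul]
  ring

def conjAlgEquiv (τ : A ≃ₐ[R] A) (D : Derivation R A A) : Derivation R A A :=
  mk' (τ.toLinearEquiv.conj D) fun a b => by
    simp [LinearEquiv.conj_apply_apply]

theorem conjAlgEquiv_apply (τ : A ≃ₐ[R] A) (D : Derivation R A A) (a : A) :
    D.conjAlgEquiv τ a = τ (D (τ.symm a)) := rfl

theorem coe_conjAlgEquiv (τ : A ≃ₐ[R] A) (D : Derivation R A A) :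
    (D.conjAlgEquiv τ : Module.End R A) = τ.toLinearEquiv.conj D := rfl

theorem eq_of_forall_algebraMap {B K : Type*} [CommRing B] [Field K] [Algebra R K] [Algebra B K]
    [IsFractionRing B K] {D₁ D₂ : Derivation R K K}
    (h : ∀ b, D₁ (algebraMap B K b) = D₂ (algebraMap B K b)) : D₁ = D₂ := by
  ext z
  obtain ⟨p, q, -, rfl⟩ := IsFractionRing.div_surjective (A := B) z
  simp only [leibniz_div, h]

end Derivation

theorem MvPolynomial.derivation_ext_of_isFractionRing {R σ K : Type*} [CommRing R] [Field K]
    [Algebra R K] [Algebra (MvPolynomial σ R) K] [IsScalarTower R (MvPolynomial σ R) K]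
    [IsFractionRing (MvPolynomial σ R) K] {D₁ D₂ : Derivation R K K}
    (h : ∀ i, D₁ (algebraMap (MvPolynomial σ R) K (X i))
      = D₂ (algebraMap (MvPolynomial σ R) K (X i))) :
    D₁ = D₂ :=
  Derivation.eq_of_forall_algebraMap (B := MvPolynomial σ R) fun p =>
    congr($(derivation_ext (D₁ := D₁.compAlgebraMap (MvPolynomial σ R))
      (D₂ := D₂.compAlgebraMap _) h) p)

theorem symm_map_eq_map_inv {M R A : Type*} [Group M] [CommSemiring R] [Semiring A] [Algebra R A]
    (ρ : M →* (A ≃ₐ[R] A)) (g : M) : (ρ g).symm = ρ g⁻¹ := by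
  rw [map_inv, AlgEquiv.aut_inv]

section DivDiff

variable {R K : Type*} [Field R] [Field K] [Algebra R K]

def divDiff (v : K) (σ : K ≃ₐ[R] K) : Module.End R K :=
  (LinearMap.mulLeft R v⁻¹).comp (LinearMap.id - σ.toLinearMap)

theorem divDiff_mul_mulLeft_sub_mulLeft_mul (v u : K) (σ : K ≃ₐ[R] K) :
    divDiff v σ * LinearMap.mulLeft R u - LinearMap.mulLeft R u * divDiff v σ
      = LinearMap.mulLeft R ((u - σ u) / v) * σ.toLinearMap := by
  ext f
  simp only [divDiff, LinearMap.sub_apply, Module.End.mul_apply, LinearMap.comp_apply,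
    LinearMap.mulLeft_apply, LinearMap.id_apply, AlgEquiv.toLinearMap_apply, map_mul]
  ring

theorem conj_divDiff (τ σ : K ≃ₐ[R] K) (v : K) :
    τ.toLinearEquiv.conj (divDiff v σ) = divDiff (τ v) (τ * σ * τ⁻¹) := by
  ext f
  simp [divDiff, LinearEquiv.conj_apply_apply, AlgEquiv.aut_inv]

theorem divDiff_smul (μ : R) (v : K) (σ : K ≃ₐ[R] K) :
    divDiff (μ • v) σ = μ⁻¹ • divDiff v σ := by
  ext f
  simp [divDiff, smul_inv₀]

end DivDiff

section LinForm

variable {n : ℕ}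

theorem linForm_single (i : Fin n) : linForm (Pi.single i 1) = X i := by
  simp [linForm, Pi.single_apply]

theorem linForm_sub (a b : Fin n → ℂ) : linForm (a - b) = linForm a - linForm b := by
  simp [linForm, sub_mul, Finset.sum_sub_distrib]

theorem linForm_smul (μ : ℂ) (a : Fin n → ℂ) : linForm (μ • a) = C μ * linForm a := by
  simp [linForm, Finset.mul_sum, mul_assoc]

theorem linForm_ne_zero {a : Fin n → ℂ} (ha : a ≠ 0) : linForm a ≠ 0 := by
  contrapose! ha
  funext j
  simpa [linForm, Pi.single_apply] using congr(eval (Pi.single j 1) $ha)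

theorem pderiv_linForm (a : Fin n → ℂ) (i : Fin n) : pderiv i (linForm a) = C (a i) := by
  simp [linForm, Pi.single_apply]

theorem algebraMap_linForm_ne_zero {K : Type*} [Field K] [Algebra (MvPolynomial (Fin n) ℂ) K]
    [IsFractionRing (MvPolynomial (Fin n) ℂ) K] {ξ : Fin n → ℂ} (hξ : ξ ≠ 0) :
    algebraMap (MvPolynomial (Fin n) ℂ) K (linForm ξ) ≠ 0 :=
  (map_ne_zero_iff _ (IsFractionRing.injective _ K)).mpr (linForm_ne_zero hξ)

end LinForm

section Reflection

open Matrix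

variable {n : ℕ} {G : Subgroup (Matrix.GeneralLinearGroup (Fin n) ℂ)}

theorem matOf_mul (g h : G) : matOf (g * h) = matOf g * matOf h := rfl

theorem matOf_inv_mul (g : G) : matOf g⁻¹ * matOf g = 1 := by
  rw [← matOf_mul, inv_mul_cancel]
  rfl

theorem conj_mem_of_rank {S : Finset G} (hS : ∀ s : G, s ∈ S ↔ (1 - matOf s).rank = 1) (g : G)
    {s : G} (hs : s ∈ S) : g * s * g⁻¹ ∈ S := by
  rw [hS] at hs ⊢
  exact (rank_one_sub_conj _ _).trans hs

theorem exists_smul_root_conj {S : Finset G} (hS : ∀ s ∈ S, (1 - matOf s).rank = 1)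
    {lam : G → ℂ} {α : G → Fin n → ℂ} (hlam : ∀ s ∈ S, lam s ≠ 1) (hα : ∀ s ∈ S, α s ≠ 0)
    (heig : ∀ s ∈ S, α s ᵥ* matOf s⁻¹ = lam s • α s) (g : G) {s : G} (hs : s ∈ S)
    (hgs : g * s * g⁻¹ ∈ S) :
    ∃ μ : ℂ, μ ≠ 0 ∧ α s ᵥ* matOf g⁻¹ = μ • α (g * s * g⁻¹) ∧ lam (g * s * g⁻¹) = lam s := by
  set t := g * s * g⁻¹
  set w := α s ᵥ* matOf g⁻¹
  have hmat : matOf g⁻¹ * matOf t⁻¹ = matOf s⁻¹ * matOf g⁻¹ := by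
    rw [← matOf_mul, ← matOf_mul]
    congr 1
    simp only [t]
    group
  have hw : w ᵥ* matOf t⁻¹ = lam s • w := by
    rw [vecMul_vecMul, hmat, ← vecMul_vecMul, heig s hs, smul_vecMul]
  have hw0 : w ≠ 0 := by
    intro h
    apply hα s hs
    have : w ᵥ* matOf g = α s := by rw [vecMul_vecMul, matOf_inv_mul, vecMul_one]
    rw [← this, h, zero_vecMul]
  have hrank : (1 - matOf t⁻¹).rank = 1 := (rank_one_sub_inv _).trans (hS t hgs)
  obtain ⟨μ, hμ⟩ :=
    eq_smul_of_vecMul_eq_smul hrank (hα t hgs) (hlam t hgs) (heig t hgs) (hlam s hs) hw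
  have hμ0 : μ ≠ 0 := by rintro rfl; exact hw0 (by rw [hμ, zero_smul])
  refine ⟨μ, hμ0, hμ, smul_left_injective ℂ hw0 ?_⟩
  show lam t • w = lam s • w
  rw [← hw, hμ, smul_vecMul, heig t hgs, smul_comm]

end Reflection

section DirDeriv

variable {n : ℕ} {K : Type} [Field K] [Algebra ℂ K]

def dirDeriv (pd : Fin n → Derivation ℂ K K) (a : Fin n → ℂ) : Derivation ℂ K K :=
  ∑ i, a i • pd i

theorem dirDeriv_apply (pd : Fin n → Derivation ℂ K K) (a : Fin n → ℂ) (f : K) :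
    dirDeriv pd a f = ∑ i, a i • pd i f := by
  rw [dirDeriv, ← Derivation.coeFnAddMonoidHom_apply, map_sum, Finset.sum_apply]
  rfl

theorem coe_dirDeriv (pd : Fin n → Derivation ℂ K K) (a : Fin n → ℂ) :
    (dirDeriv pd a : Module.End ℂ K) = ∑ i, a i • (pd i : Module.End ℂ K) := by
  ext f
  simp [dirDeriv_apply]

end DirDeriv

section Dunkl

open Matrix

variable {n : ℕ} {K : Type} [Field K] [Algebra ℂ K]
  [Algebra (MvPolynomial (Fin n) ℂ) K] [IsScalarTower ℂ (MvPolynomial (Fin n) ℂ) K]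
  {G : Subgroup (Matrix.GeneralLinearGroup (Fin n) ℂ)}

local notation "φ" => algebraMap (MvPolynomial (Fin n) ℂ) K

theorem algebraMap_C_eq_smul_one (μ : ℂ) : φ (C μ) = μ • (1 : K) := by
  rw [Algebra.smul_def, mul_one, IsScalarTower.algebraMap_apply ℂ (MvPolynomial (Fin n) ℂ) K,
    algebraMap_eq]

theorem algebraMap_linForm (ξ : Fin n → ℂ) : φ (linForm ξ) = ∑ i, ξ i • φ (X i) := by
  simp [linForm, algebraMap_C_eq_smul_one]

theorem algebraMap_linForm_smul (μ : ℂ) (ξ : Fin n → ℂ) :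
    φ (linForm (μ • ξ)) = μ • φ (linForm ξ) := by
  rw [linForm_smul, map_mul, algebraMap_C_eq_smul_one, smul_one_mul]

theorem rho_algebraMap_linForm {ρ : G →* (K ≃ₐ[ℂ] K)}
    (hρ : ∀ (g : G) (i : Fin n), ρ g (φ (X i)) = φ (∑ j, C (matOf g⁻¹ i j) * X j))
    (g : G) (ξ : Fin n → ℂ) :
    ρ g (φ (linForm ξ)) = φ (linForm (ξ ᵥ* matOf g⁻¹)) := by
  have hrow (i : Fin n) : ∑ j, C (matOf g⁻¹ i j) * X j = linForm (matOf g⁻¹ i) := rfl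
  simp only [algebraMap_linForm, map_sum, map_smul, hρ, hrow, Finset.smul_sum, smul_smul]
  rw [Finset.sum_comm]
  simp only [vecMul, dotProduct, Finset.sum_smul]

theorem dirDeriv_algebraMap_linForm {pd : Fin n → Derivation ℂ K K}
    (hpd : ∀ (i : Fin n) (q : MvPolynomial (Fin n) ℂ), pd i (φ q) = φ (pderiv i q))
    (a ξ : Fin n → ℂ) : dirDeriv pd a (φ (linForm ξ)) = (ξ ⬝ᵥ a) • (1 : K) := by
  simp [dirDeriv_apply, hpd, pderiv_linForm, algebraMap_C_eq_smul_one, smul_smul, dotProduct,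
    Finset.sum_smul, mul_comm]

theorem dunklOp_eq (S : Finset G) (c lam : G → ℂ) (α : G → Fin n → ℂ) (ρ : G →* (K ≃ₐ[ℂ] K))
    (pd : Fin n → Derivation ℂ K K) (a : Fin n → ℂ) :
    (dunklOp n K S c lam α ρ pd a : Module.End ℂ K) = (dirDeriv pd a : Module.End ℂ K)
      - ∑ s ∈ S, (2 * c s * (α s ⬝ᵥ a) / (1 - lam s)) • divDiff (φ (linForm (α s))) (ρ s) := by
  rw [coe_dirDeriv]
  rfl

theorem divDiff_mul_mulLinForm_sub_mulLinForm_mul [IsFractionRing (MvPolynomial (Fin n) ℂ) K]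
    {ρ : G →* (K ≃ₐ[ℂ] K)}
    (hρ : ∀ (g : G) (i : Fin n), ρ g (φ (X i)) = φ (∑ j, C (matOf g⁻¹ i j) * X j))
    {s : G} (hs : (1 - matOf s).rank = 1) {α αv : Fin n → ℂ} {l : ℂ} (hl : l ≠ 1) (hα : α ≠ 0)
    (hαs : α ᵥ* matOf s⁻¹ = l • α) (hαvs : matOf s *ᵥ αv = l⁻¹ • αv) (hααv : α ⬝ᵥ αv = 2)
    (ξ : Fin n → ℂ) :
    divDiff (φ (linForm α)) (ρ s) * mulLinForm n K ξ
        - mulLinForm n K ξ * divDiff (φ (linForm α)) (ρ s)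
      = ((1 - l) * (ξ ⬝ᵥ αv) / 2) • (ρ s).toLinearMap := by
  have hαv : αv ≠ 0 := by rintro rfl; simp at hααv
  have hrefl : ξ - ξ ᵥ* matOf s⁻¹ = ((1 - l) * (ξ ⬝ᵥ αv) / 2) • α := by
    rw [← hααv, ← vecMul_one_sub_eq_smul ((rank_one_sub_inv _).trans hs) hα hl hαs
      (mulVec_inv_eq_smul _ hαv hαvs) (by simp [hααv]) ξ, vecMul_sub, vecMul_one]
    rfl
  have hquot : (φ (linForm ξ) - ρ s (φ (linForm ξ))) / φ (linForm α)
      = ((1 - l) * (ξ ⬝ᵥ αv) / 2) • (1 : K) := by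
    rw [rho_algebraMap_linForm hρ, ← map_sub, ← linForm_sub, hrefl, algebraMap_linForm_smul,
      smul_div_assoc, div_self (algebraMap_linForm_ne_zero hα)]
  rw [mulLinForm, divDiff_mul_mulLeft_sub_mulLeft_mul, hquot]
  ext f
  simp

theorem dunklOp_mul_mulLinForm_sub_mulLinForm_mul [IsFractionRing (MvPolynomial (Fin n) ℂ) K]
    {S : Finset G} (hS : ∀ s ∈ S, (1 - matOf s).rank = 1) {c lam : G → ℂ} {α αv : G → Fin n → ℂ}
    (hlam : ∀ s ∈ S, lam s ≠ 1) (hα : ∀ s ∈ S, α s ≠ 0)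
    (heig : ∀ s ∈ S, α s ᵥ* matOf s⁻¹ = lam s • α s)
    (heigv : ∀ s ∈ S, matOf s *ᵥ αv s = (lam s)⁻¹ • αv s)
    (hnorm : ∀ s ∈ S, α s ⬝ᵥ αv s = 2) {ρ : G →* (K ≃ₐ[ℂ] K)}
    (hρ : ∀ (g : G) (i : Fin n), ρ g (φ (X i)) = φ (∑ j, C (matOf g⁻¹ i j) * X j))
    {pd : Fin n → Derivation ℂ K K}
    (hpd : ∀ (i : Fin n) (q : MvPolynomial (Fin n) ℂ), pd i (φ q) = φ (pderiv i q))
    (a ξ : Fin n → ℂ) :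
    dunklOp n K S c lam α ρ pd a * mulLinForm n K ξ
        - mulLinForm n K ξ * dunklOp n K S c lam α ρ pd a
      = (ξ ⬝ᵥ a) • LinearMap.id
        - ∑ s ∈ S, (c s * (α s ⬝ᵥ a) * (ξ ⬝ᵥ αv s)) • (ρ s).toLinearMap := by
  rw [dunklOp_eq]
  simp only [sub_mul, mul_sub, Finset.sum_mul, Finset.mul_sum, smul_mul_assoc, mul_smul_comm]
  rw [sub_sub_sub_comm, ← Finset.sum_sub_distrib]
  congr 1
  · rw [mulLinForm, Derivation.mul_mulLeft_sub_mulLeft_mul, dirDeriv_algebraMap_linForm hpd]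
    ext f
    simp
  · refine Finset.sum_congr rfl fun s hs => ?_
    rw [← smul_sub (A := Module.End ℂ K), divDiff_mul_mulLinForm_sub_mulLinForm_mul hρ (hS s hs)
      (hlam s hs) (hα s hs) (heig s hs) (heigv s hs) (hnorm s hs), smul_smul]
    congr 1
    field_simp [sub_ne_zero.mpr (hlam s hs).symm]

theorem conj_dirDeriv [IsFractionRing (MvPolynomial (Fin n) ℂ) K] {ρ : G →* (K ≃ₐ[ℂ] K)}
    (hρ : ∀ (g : G) (i : Fin n), ρ g (φ (X i)) = φ (∑ j, C (matOf g⁻¹ i j) * X j))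
    {pd : Fin n → Derivation ℂ K K}
    (hpd : ∀ (i : Fin n) (q : MvPolynomial (Fin n) ℂ), pd i (φ q) = φ (pderiv i q))
    (g : G) (a : Fin n → ℂ) :
    (ρ g).toLinearEquiv.conj (dirDeriv pd a : Module.End ℂ K) = dirDeriv pd (matOf g *ᵥ a) := by
  rw [← Derivation.coe_conjAlgEquiv]
  congr 1
  refine MvPolynomial.derivation_ext_of_isFractionRing (σ := Fin n) fun i => ?_
  rw [← linForm_single, Derivation.conjAlgEquiv_apply, symm_map_eq_map_inv,
    rho_algebraMap_linForm hρ, inv_inv, dirDeriv_algebraMap_linForm hpd,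
    dirDeriv_algebraMap_linForm hpd, map_smul, map_one, dotProduct_mulVec]

theorem conj_smul_divDiff [IsFractionRing (MvPolynomial (Fin n) ℂ) K] {S : Finset G}
    (hS : ∀ s ∈ S, (1 - matOf s).rank = 1) {c lam : G → ℂ} {α : G → Fin n → ℂ}
    (hc : ∀ (g s : G), s ∈ S → c (g * s * g⁻¹) = c s) (hlam : ∀ s ∈ S, lam s ≠ 1)
    (hα : ∀ s ∈ S, α s ≠ 0) (heig : ∀ s ∈ S, α s ᵥ* matOf s⁻¹ = lam s • α s)
    {ρ : G →* (K ≃ₐ[ℂ] K)}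
    (hρ : ∀ (g : G) (i : Fin n), ρ g (φ (X i)) = φ (∑ j, C (matOf g⁻¹ i j) * X j))
    (g : G) (a : Fin n → ℂ) {s : G} (hs : s ∈ S) (hgs : g * s * g⁻¹ ∈ S) :
    (ρ g).toLinearEquiv.conj
        ((2 * c s * (α s ⬝ᵥ a) / (1 - lam s)) • divDiff (φ (linForm (α s))) (ρ s))
      = (2 * c (g * s * g⁻¹) * (α (g * s * g⁻¹) ⬝ᵥ (matOf g *ᵥ a)) / (1 - lam (g * s * g⁻¹))) •
          divDiff (φ (linForm (α (g * s * g⁻¹)))) (ρ (g * s * g⁻¹)) := by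
  obtain ⟨μ, hμ0, hμ, hlam_conj⟩ := exists_smul_root_conj hS hlam hα heig g hs hgs
  have hαa : α s ⬝ᵥ a = μ * (α (g * s * g⁻¹) ⬝ᵥ (matOf g *ᵥ a)) := by
    rw [← smul_eq_mul, ← smul_dotProduct, ← hμ, ← dotProduct_mulVec, mulVec_mulVec,
      matOf_inv_mul, one_mulVec]
  rw [map_smul, conj_divDiff, ← map_inv, ← map_mul, ← map_mul, rho_algebraMap_linForm hρ, hμ,
    algebraMap_linForm_smul, divDiff_smul, smul_smul, hc g s hs, hlam_conj, hαa]
  congr 1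
  field_simp [sub_ne_zero.mpr (hlam s hs).symm]

theorem conj_dunklOp [IsFractionRing (MvPolynomial (Fin n) ℂ) K] {S : Finset G}
    (hS : ∀ s : G, s ∈ S ↔ (1 - matOf s).rank = 1) {c lam : G → ℂ} {α : G → Fin n → ℂ}
    (hc : ∀ (g s : G), s ∈ S → c (g * s * g⁻¹) = c s) (hlam : ∀ s ∈ S, lam s ≠ 1)
    (hα : ∀ s ∈ S, α s ≠ 0) (heig : ∀ s ∈ S, α s ᵥ* matOf s⁻¹ = lam s • α s)
    {ρ : G →* (K ≃ₐ[ℂ] K)}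
    (hρ : ∀ (g : G) (i : Fin n), ρ g (φ (X i)) = φ (∑ j, C (matOf g⁻¹ i j) * X j))
    {pd : Fin n → Derivation ℂ K K}
    (hpd : ∀ (i : Fin n) (q : MvPolynomial (Fin n) ℂ), pd i (φ q) = φ (pderiv i q))
    (g : G) (a : Fin n → ℂ) :
    (ρ g).toLinearEquiv.conj (dunklOp n K S c lam α ρ pd a)
      = dunklOp n K S c lam α ρ pd (matOf g *ᵥ a) := by
  rw [dunklOp_eq, dunklOp_eq, map_sub, map_sum, conj_dirDeriv hρ hpd]
  congr 1
  refine Finset.sum_nbij' (fun s => g * s * g⁻¹) (fun t => g⁻¹ * t * g)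
    (fun s hs => conj_mem_of_rank hS g hs) (fun t ht => by simpa using conj_mem_of_rank hS g⁻¹ ht)
    (fun s _ => by group) (fun t _ => by group) fun s hs => ?_
  exact conj_smul_divDiff (fun s => (hS s).mp) hc hlam hα heig hρ g a hs (conj_mem_of_rank hS g hs)

end Dunkl

theorem dunkl_commutation_relations_general (n : ℕ)
    (K : Type) [Field K] [Algebra ℂ K]
    [Algebra (MvPolynomial (Fin n) ℂ) K] [IsScalarTower ℂ (MvPolynomial (Fin n) ℂ) K]
    [IsFractionRing (MvPolynomial (Fin n) ℂ) K]
    (G : Subgroup (Matrix.GeneralLinearGroup (Fin n) ℂ))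
    (S : Finset G)
    (hS : ∀ s : G, s ∈ S ↔
      Matrix.rank ((1 : Matrix (Fin n) (Fin n) ℂ) - matOf s) = 1)
    (c lam : G → ℂ) (α αv : G → Fin n → ℂ)
    (hc : ∀ (g s : G), s ∈ S → c (g * s * g⁻¹) = c s)
    (hlam : ∀ s ∈ S, lam s ≠ 1)
    (hα : ∀ s ∈ S, α s ≠ 0)
    (heig : ∀ s ∈ S, Matrix.vecMul (α s) (matOf s⁻¹) = lam s • α s)
    (heigv : ∀ s ∈ S, Matrix.mulVec (matOf s) (αv s) = (lam s)⁻¹ • αv s)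
    (hnorm : ∀ s ∈ S, ∑ i, α s i * αv s i = 2)
    (ρ : G →* (K ≃ₐ[ℂ] K))
    (hρ : ∀ (g : G) (i : Fin n),
      ρ g (algebraMap (MvPolynomial (Fin n) ℂ) K (MvPolynomial.X i)) =
        algebraMap (MvPolynomial (Fin n) ℂ) K
          (∑ j, MvPolynomial.C (matOf g⁻¹ i j) * MvPolynomial.X j))
    (pd : Fin n → Derivation ℂ K K)
    (hpd : ∀ (i : Fin n) (q : MvPolynomial (Fin n) ℂ),
      pd i (algebraMap (MvPolynomial (Fin n) ℂ) K q)
        = algebraMap (MvPolynomial (Fin n) ℂ) K (MvPolynomial.pderiv i q)) :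
    (∀ (a ξ : Fin n → ℂ),
      (dunklOp n K S c lam α ρ pd a).comp (mulLinForm n K ξ)
          - (mulLinForm n K ξ).comp (dunklOp n K S c lam α ρ pd a)
        = (∑ i, ξ i * a i) • (LinearMap.id : K →ₗ[ℂ] K)
          - ∑ s ∈ S, (c s * (∑ i, α s i * a i) * (∑ i, ξ i * αv s i)) •
              (ρ s).toLinearMap) ∧
    (∀ (g : G) (a : Fin n → ℂ),
      (ρ g).toLinearMap.comp ((dunklOp n K S c lam α ρ pd a).comp (ρ g⁻¹).toLinearMap)
        = dunklOp n K S c lam α ρ pd (Matrix.mulVec (matOf g) a)) := by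
  refine ⟨dunklOp_mul_mulLinForm_sub_mulLinForm_mul (fun s => (hS s).mp) hlam hα heig heigv hnorm
    hρ hpd, fun g a => ?_⟩
  rw [← conj_dunklOp hS hc hlam hα heig hρ hpd g a, LinearEquiv.conj_apply, ← symm_map_eq_map_inv]
  rfl

/-- **Commutation relations for Dunkl operators.**  With `G ⊆ GL_n(ℂ)` finite, `S` its set
of reflections, `α_s, α_s^∨, λ_s` the reflection data (normalized by `α_s(α_s^∨) = 2`) and
`c` conjugation-invariant, one has, for every `a ∈ ℂⁿ` and every covector `x = ξ ∈ (ℂⁿ)*`: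
`[D_a, M_x] = x(a)·Id − Σ_{s∈S} c_s α_s(a) x(α_s^∨) ρ(s)`, and moreover
`ρ(g) ∘ D_a ∘ ρ(g)⁻¹ = D_{ga}` for every `g ∈ G`. -/
theorem dunkl_commutation_relations (n : ℕ) (hn : 1 ≤ n)
    (K : Type) [Field K] [Algebra ℂ K]
    [Algebra (MvPolynomial (Fin n) ℂ) K] [IsScalarTower ℂ (MvPolynomial (Fin n) ℂ) K]
    [IsFractionRing (MvPolynomial (Fin n) ℂ) K]
    (G : Subgroup (Matrix.GeneralLinearGroup (Fin n) ℂ)) [Finite G]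
    (S : Finset G)
    (hS : ∀ s : G, s ∈ S ↔
      Matrix.rank ((1 : Matrix (Fin n) (Fin n) ℂ) - matOf s) = 1)
    (c lam : G → ℂ) (α αv : G → Fin n → ℂ)
    (hc : ∀ (g s : G), s ∈ S → c (g * s * g⁻¹) = c s)
    (hlam : ∀ s ∈ S, lam s ≠ 1)
    (hα : ∀ s ∈ S, α s ≠ 0)
    (heig : ∀ s ∈ S, Matrix.vecMul (α s) (matOf s⁻¹) = lam s • α s)
    (heigv : ∀ s ∈ S, Matrix.mulVec (matOf s) (αv s) = (lam s)⁻¹ • αv s)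
    (hnorm : ∀ s ∈ S, ∑ i, α s i * αv s i = 2)
    (ρ : G →* (K ≃ₐ[ℂ] K))
    (hρ : ∀ (g : G) (i : Fin n),
      ρ g (algebraMap (MvPolynomial (Fin n) ℂ) K (MvPolynomial.X i)) =
        algebraMap (MvPolynomial (Fin n) ℂ) K
          (∑ j, MvPolynomial.C (matOf g⁻¹ i j) * MvPolynomial.X j))
    (pd : Fin n → Derivation ℂ K K)
    (hpd : ∀ (i : Fin n) (q : MvPolynomial (Fin n) ℂ),
      pd i (algebraMap (MvPolynomial (Fin n) ℂ) K q)
        = algebraMap (MvPolynomial (Fin n) ℂ) K (MvPolynomial.pderiv i q)) :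
    (∀ (a ξ : Fin n → ℂ),
      (dunklOp n K S c lam α ρ pd a).comp (mulLinForm n K ξ)
          - (mulLinForm n K ξ).comp (dunklOp n K S c lam α ρ pd a)
        = (∑ i, ξ i * a i) • (LinearMap.id : K →ₗ[ℂ] K)
          - ∑ s ∈ S, (c s * (∑ i, α s i * a i) * (∑ i, ξ i * αv s i)) •
              (ρ s).toLinearMap) ∧
    (∀ (g : G) (a : Fin n → ℂ),
      (ρ g).toLinearMap.comp ((dunklOp n K S c lam α ρ pd a).comp (ρ g⁻¹).toLinearMap)
        = dunklOp n K S c lam α ρ pd (Matrix.mulVec (matOf g) a)) :=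
  dunkl_commutation_relations_general n K G S hS c lam α αv hc hlam hα heig heigv hnorm ρ hρ pd hpd

end
end

section
/- (C. Dunkl.) Let n ≥ 2 and let r be a positive integer not divisible by n; set c = r/n. For i = 1,…,n define f_i ∈ ℂ[x_1,…,x_n] as the coefficient of z^{−1} in the formal expansion at z = ∞ of [(z−x_1)⋯(z−x_n)]^{r/n} / (z−x_i). Then each f_i is a nonzero homogeneous polynomial of degree r, Σ_{i=1}^n f_i = 0, and each f_i is a singular vector for the type A Dunkl operators with parameter c = r/n: for every y = (y_1,…,y_n) ∈ ℂ^n with Σ_i y_i = 0 and every i, one has D_y f_i = 0. -/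
open MvPolynomial

/-- The generalized binomial coefficient `μ(μ−1)⋯(μ−k+1)/k!` for `μ ∈ ℂ`. -/
noncomputable def genBinom (μ : ℂ) (k : ℕ) : ℂ :=
  (∏ m ∈ Finset.range k, (μ - m)) / (k.factorial : ℂ)

/-- The formal expansion at `z = ∞` of `[(z−x₁)⋯(z−xₙ)]^μ · z^{-r}`, written as a power
series in `w = z⁻¹`: the product over `j` of `(1 − xⱼw)^μ = Σ_k binom(μ,k)(−xⱼ)^k w^k`. -/
noncomputable def prodBinomSeries (n : ℕ) (μ : ℂ) :
    PowerSeries (MvPolynomial (Fin n) ℂ) :=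
  ∏ j : Fin n, PowerSeries.mk fun k =>
    MvPolynomial.C ((-1 : ℂ) ^ k * genBinom μ k) * MvPolynomial.X j ^ k

/-- `jackVector n r i` is the coefficient of `z⁻¹` in the formal expansion at `z = ∞` of
`[(z−x₁)⋯(z−xₙ)]^{r/n}/(z−xᵢ)`: it equals the coefficient of `w^r` in
`∏ⱼ(1−xⱼw)^{r/n} · Σ_k xᵢ^k w^k`. -/
noncomputable def jackVector (n r : ℕ) (i : Fin n) : MvPolynomial (Fin n) ℂ :=
  PowerSeries.coeff (R := MvPolynomial (Fin n) ℂ) r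
    (prodBinomSeries n ((r : ℂ) / (n : ℂ)) * PowerSeries.mk fun k => MvPolynomial.X i ^ k)

/-!
Everything is read off power series in `w = z⁻¹` with coefficients in `ℂ[x₁,…,xₙ]`: with
`P = ∏ⱼ (1 - xⱼ w)^μ`, `Sᵢ = 1/(1 - xᵢ w)` and `Qᵢ = P Sᵢ`, the vector `fᵢ` is the `w^r`-coefficient
of `Qᵢ`. The logarithmic derivative `∂ⱼ P = -μ w Sⱼ P` gives `∂ⱼ Qᵢ = -μ w Sⱼ Qᵢ + δᵢⱼ w Sᵢ Qᵢ`,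
while `Sᵢ - Sₗ = (xᵢ - xₗ) w Sᵢ Sₗ` shows that the divided difference of `fᵢ` along `sᵢₗ` is
`hₗ = [w^r] w Sₗ Qᵢ`, and `fᵢ` is fixed by transpositions not involving `i`. Since the coefficients
of `Qᵢ` are homogeneous, Euler's identity turns `∑ⱼ xⱼ ∂ⱼ` into the degree; for `μ n = r` this gives
`∑ᵢ fᵢ = 0` and `hᵢ = μ ∑ₗ hₗ`, and the latter makes the derivative part `μ ∑ₗ (yᵢ - yₗ) hₗ` of
`D_y fᵢ` cancel its difference part. At `x = eᵢ` the polynomial `fᵢ` specializes to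
`[w^r] (1 - w)^(μ-1) = (-1)^r binom(μ - 1, r)`, which is nonzero because `r/n ∉ ℤ`.
-/

open scoped PowerSeries

lemma Derivation.map_prod_eq_zero {R A : Type*} [CommSemiring R] [CommSemiring A] [Algebra R A]
    {ι : Type*} (D : Derivation R A A) (s : Finset ι) (F : ι → A) (h : ∀ l ∈ s, D (F l) = 0) :
    D (∏ l ∈ s, F l) = 0 :=
  Finset.prod_induction F (fun a => D a = 0)
    (fun a b ha hb => by rw [D.leibniz, ha, hb, smul_zero, smul_zero, add_zero])
    D.map_one_eq_zero h

lemma genBinom_zero (μ : ℂ) : genBinom μ 0 = 1 := by simp [genBinom]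

lemma succ_mul_genBinom_succ_eq_sub_mul (μ : ℂ) (k : ℕ) :
    ((k : ℂ) + 1) * genBinom μ (k + 1) = (μ - k) * genBinom μ k := by
  have hk : ((k : ℂ) + 1) ≠ 0 := by exact_mod_cast k.succ_ne_zero
  simp only [genBinom, Finset.prod_range_succ, Nat.factorial_succ, Nat.cast_mul, Nat.cast_add,
    Nat.cast_one]
  field_simp

lemma succ_mul_genBinom_succ (μ : ℂ) (k : ℕ) :
    ((k : ℂ) + 1) * genBinom μ (k + 1) = μ * genBinom (μ - 1) k := by
  have hk : ((k : ℂ) + 1) ≠ 0 := by exact_mod_cast k.succ_ne_zero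
  have hprod : ∏ m ∈ Finset.range (k + 1), (μ - m) = μ * ∏ m ∈ Finset.range k, (μ - 1 - m) := by
    rw [Finset.prod_range_succ']
    simp only [Nat.cast_add, Nat.cast_one, Nat.cast_zero, sub_zero, sub_add_eq_sub_sub_swap]
    ring
  simp only [genBinom, hprod, Nat.factorial_succ, Nat.cast_mul, Nat.cast_add, Nat.cast_one]
  field_simp

lemma genBinom_succ (μ : ℂ) (k : ℕ) :
    genBinom μ (k + 1) = genBinom (μ - 1) (k + 1) + genBinom (μ - 1) k := by
  have hk : ((k : ℂ) + 1) ≠ 0 := by exact_mod_cast k.succ_ne_zero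
  apply mul_left_cancel₀ hk
  linear_combination succ_mul_genBinom_succ μ k - succ_mul_genBinom_succ_eq_sub_mul (μ - 1) k

lemma genBinom_ne_zero {μ : ℂ} {k : ℕ} (h : ∀ m < k, μ ≠ m) : genBinom μ k ≠ 0 :=
  div_ne_zero
    (Finset.prod_ne_zero_iff.mpr fun m hm => sub_ne_zero.mpr (h m (Finset.mem_range.mp hm)))
    (Nat.cast_ne_zero.mpr k.factorial_ne_zero)

lemma Finset.sum_filter_lt_eq_sum {ι M : Type*} [Fintype ι] [LinearOrder ι] [AddCommMonoid M]
    (G : ι → ι → M) (i : ι) (hsymm : ∀ a b, G a b = G b a) (hdiag : G i i = 0)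
    (hzero : ∀ a b, a ≠ i → b ≠ i → G a b = 0) :
    ∑ q ∈ Finset.univ.filter (fun q : ι × ι => q.1 < q.2), G q.1 q.2 = ∑ l, G i l := by
  have hsplit (a b : ι) : (if a < b then G a b else 0)
      = (if a = i then (if i < b then G i b else 0) else 0)
        + (if b = i then (if a < i then G i a else 0) else 0) := by
    rcases eq_or_ne a i with ha | ha <;> rcases eq_or_ne b i with hb | hb
    · simp [ha, hb]
    · simp [ha, hb]
    · simp [ha, hb, hsymm a]
    · simp [ha, hb, hzero a b ha hb]
  have hdiag' (l : ι) : (if i < l then G i l else 0) + (if l < i then G i l else 0) = G i l := by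
    rcases lt_trichotomy i l with h | rfl | h
    · simp [h, h.not_gt]
    · simp [hdiag]
    · simp [h, h.not_gt]
  rw [Finset.sum_filter, Fintype.sum_prod_type,
    Finset.sum_congr rfl fun a _ => Finset.sum_congr rfl fun b _ => hsplit a b]
  simp only [Finset.sum_add_distrib]
  rw [Finset.sum_comm (f := fun a b => if a = i then (if i < b then G i b else 0) else 0)]
  simp only [Finset.sum_ite_eq', Finset.mem_univ, if_true, ← Finset.sum_add_distrib, hdiag']

section DunklOperator

variable {σ : Type*} {K : Type*} [Field K] [Algebra ℂ K] [Algebra (MvPolynomial σ ℂ) K]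

lemma algebraMap_complex_apply [IsScalarTower ℂ (MvPolynomial σ ℂ) K] (z : ℂ) :
    algebraMap ℂ K z = algebraMap (MvPolynomial σ ℂ) K (C z) := by
  rw [IsScalarTower.algebraMap_apply ℂ (MvPolynomial σ ℂ) K, MvPolynomial.algebraMap_eq]

variable (K) [Fintype σ] [LinearOrder σ]

noncomputable def dunklOperator (c : ℂ) (y : σ → ℂ) (f : MvPolynomial σ ℂ) : K :=
  algebraMap (MvPolynomial σ ℂ) K (∑ j, C (y j) * pderiv j f)
    - algebraMap ℂ K c *
      ∑ q ∈ Finset.univ.filter (fun q : σ × σ => q.1 < q.2),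
        algebraMap ℂ K (y q.1 - y q.2) *
          (algebraMap (MvPolynomial σ ℂ) K (f - rename (Equiv.swap q.1 q.2) f) /
            algebraMap (MvPolynomial σ ℂ) K (X q.1 - X q.2))

variable {K} [IsScalarTower ℂ (MvPolynomial σ ℂ) K] [IsFractionRing (MvPolynomial σ ℂ) K]

lemma dunklOperator_eq_zero {c : ℂ} {y : σ → ℂ} {f : MvPolynomial σ ℂ} (i : σ)
    (g : σ → MvPolynomial σ ℂ)
    (hderiv : ∑ j, C (y j) * pderiv j f = C c * ∑ l, C (y i - y l) * g l)
    (hswap : ∀ l, f - rename (Equiv.swap i l) f = (X i - X l) * g l)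
    (hfix : ∀ a b, a ≠ i → b ≠ i → rename (Equiv.swap a b) f = f) :
    dunklOperator K c y f = 0 := by
  set A := algebraMap (MvPolynomial σ ℂ) K
  have hA : Function.Injective A := IsFractionRing.injective _ K
  have hpairs := Finset.sum_filter_lt_eq_sum
    (fun a b => algebraMap ℂ K (y a - y b) * (A (f - rename (Equiv.swap a b) f) / A (X a - X b)))
    i (fun a b => by
      rw [Equiv.swap_comm, ← neg_sub (y a), ← neg_sub (X a), map_neg, map_neg, div_neg,
        neg_mul_neg])
    (by simp) (fun a b ha hb => by simp [hfix a b ha hb])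
  have hterm (l : σ) :
      algebraMap ℂ K (y i - y l) * (A (f - rename (Equiv.swap i l) f) / A (X i - X l))
        = A (C (y i - y l) * g l) := by
    rcases eq_or_ne l i with rfl | hl
    · simp
    have hX : A (X i - X l) ≠ 0 :=
      (map_ne_zero_iff A hA).mpr (sub_ne_zero.mpr ((X_injective (R := ℂ)).ne hl.symm))
    rw [hswap, map_mul, mul_div_cancel_left₀ _ hX, map_mul, algebraMap_complex_apply (σ := σ)]
  rw [dunklOperator, hpairs, hderiv, Finset.sum_congr rfl fun l _ => hterm l, ← map_sum,
    algebraMap_complex_apply (σ := σ), ← map_mul, sub_self]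

end DunklOperator

namespace Dunkl

/-- The binomial series `(1 - w) ^ μ`. -/
noncomputable def oneSubPow (μ : ℂ) : ℂ⟦X⟧ :=
  PowerSeries.mk fun k => (-1) ^ k * genBinom μ k

lemma constantCoeff_oneSubPow (μ : ℂ) : PowerSeries.constantCoeff (oneSubPow μ) = 1 := by
  simp [oneSubPow, ← PowerSeries.coeff_zero_eq_constantCoeff_apply, genBinom_zero]

lemma oneSubPow_eq_one_sub_mul (μ : ℂ) :
    oneSubPow μ = (1 - PowerSeries.X) * oneSubPow (μ - 1) := by
  ext (_ | k)
  · simp [oneSubPow, sub_mul, genBinom_zero]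
  · simp [oneSubPow, sub_mul, PowerSeries.coeff_succ_X_mul, genBinom_succ μ k, pow_succ]
    ring

lemma derivative_oneSubPow (μ : ℂ) :
    PowerSeries.derivative ℂ (oneSubPow μ) = -μ • oneSubPow (μ - 1) := by
  ext k
  simp only [PowerSeries.coeff_derivative, oneSubPow, PowerSeries.coeff_mk, PowerSeries.coeff_smul,
    smul_eq_mul]
  linear_combination (-1) ^ (k + 1) * succ_mul_genBinom_succ μ k

lemma derivative_mk_one :
    PowerSeries.derivative ℂ (PowerSeries.mk 1) = PowerSeries.mk 1 * PowerSeries.mk 1 := by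
  rw [(PowerSeries.derivative ℂ).leibniz_of_mul_eq_one (PowerSeries.mk_one_mul_one_sub_eq_one ℂ)]
  simp [sq]

lemma mk_one_mul_oneSubPow (μ : ℂ) :
    PowerSeries.mk 1 * oneSubPow μ = oneSubPow (μ - 1) := by
  rw [oneSubPow_eq_one_sub_mul μ, ← mul_assoc, PowerSeries.mk_one_mul_one_sub_eq_one, one_mul]

variable {σ : Type*}

/-- The substitution `w ↦ xⱼ w`, taking a series with scalar coefficients to one with
polynomial coefficients. -/
noncomputable def scaledByVar (j : σ) : ℂ⟦X⟧ →+* (MvPolynomial σ ℂ)⟦X⟧ :=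
  (PowerSeries.rescale (X j)).comp (PowerSeries.map C)

lemma coeff_scaledByVar (j : σ) (g : ℂ⟦X⟧) (k : ℕ) :
    PowerSeries.coeff k (scaledByVar j g) = C (PowerSeries.coeff k g) * X j ^ k := by
  simp [scaledByVar, PowerSeries.coeff_rescale, PowerSeries.coeff_map, mul_comm]

lemma scaledByVar_smul (j : σ) (μ : ℂ) (g : ℂ⟦X⟧) :
    scaledByVar j (μ • g) = μ • scaledByVar j g := by
  ext k
  simp [coeff_scaledByVar, smul_eq_C_mul, mul_assoc]

lemma map_eval_scaledByVar (b : σ → ℂ) (j : σ) (g : ℂ⟦X⟧) :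
    PowerSeries.map (eval b) (scaledByVar j g) = PowerSeries.rescale (b j) g := by
  ext k
  simp [coeff_scaledByVar, PowerSeries.coeff_map, PowerSeries.coeff_rescale, mul_comm]

lemma map_rename_scaledByVar (e : σ → σ) (j : σ) (g : ℂ⟦X⟧) :
    PowerSeries.map (rename e).toRingHom (scaledByVar j g) = scaledByVar (e j) g := by
  ext k
  simp [coeff_scaledByVar, PowerSeries.coeff_map]

lemma scaledByVar_X (j : σ) :
    scaledByVar j PowerSeries.X = PowerSeries.C (X j) * PowerSeries.X := by
  simp [scaledByVar, PowerSeries.rescale_X]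

noncomputable def seriesPderiv (j : σ) :
    Derivation ℂ (MvPolynomial σ ℂ)⟦X⟧ (MvPolynomial σ ℂ)⟦X⟧ :=
  Derivation.mk'
    { toFun f := PowerSeries.mk fun k => pderiv j (PowerSeries.coeff k f)
      map_add' f g := by ext; simp
      map_smul' a f := by ext; simp }
    fun f g => PowerSeries.ext fun k => by
      rw [smul_eq_mul, smul_eq_mul, mul_comm g]
      simp only [LinearMap.coe_mk, AddHom.coe_mk, PowerSeries.coeff_mk, PowerSeries.coeff_mul,
        map_add, map_sum, Derivation.leibniz, smul_eq_mul, ← Finset.sum_add_distrib]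
      exact Finset.sum_congr rfl fun _ _ => by ring

lemma coeff_seriesPderiv (j : σ) (f : (MvPolynomial σ ℂ)⟦X⟧) (k : ℕ) :
    PowerSeries.coeff k (seriesPderiv j f) = pderiv j (PowerSeries.coeff k f) := by
  simp [seriesPderiv]

lemma seriesPderiv_scaledByVar_of_ne {j l : σ} (h : l ≠ j) (g : ℂ⟦X⟧) :
    seriesPderiv l (scaledByVar j g) = 0 := by
  ext1 k
  simp [coeff_seriesPderiv, coeff_scaledByVar, pderiv_X_of_ne h.symm]

lemma seriesPderiv_scaledByVar_self (j : σ) (g : ℂ⟦X⟧) :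
    seriesPderiv j (scaledByVar j g)
      = PowerSeries.X * scaledByVar j (PowerSeries.derivative ℂ g) := by
  ext1 (_ | k)
  · simp [coeff_seriesPderiv, coeff_scaledByVar]
  · simp [coeff_seriesPderiv, coeff_scaledByVar, PowerSeries.coeff_succ_X_mul,
      PowerSeries.coeff_derivative, pderiv_X_self]
    ring

variable (σ) in
def homogeneousCoeffs : Submonoid (MvPolynomial σ ℂ)⟦X⟧ where
  carrier := {f | ∀ k, (PowerSeries.coeff k f).IsHomogeneous k}
  one_mem' k := by
    rw [PowerSeries.coeff_one]
    split_ifs with h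
    · exact h ▸ isHomogeneous_one σ ℂ
    · exact isHomogeneous_zero σ ℂ k
  mul_mem' {f g} hf hg k := by
    rw [PowerSeries.coeff_mul]
    refine IsHomogeneous.sum _ _ _ fun p hp => ?_
    rw [← Finset.HasAntidiagonal.mem_antidiagonal.mp hp]
    exact (hf p.1).mul (hg p.2)

lemma scaledByVar_mem_homogeneousCoeffs (j : σ) (g : ℂ⟦X⟧) :
    scaledByVar j g ∈ homogeneousCoeffs σ := fun k => by
  rw [coeff_scaledByVar]
  exact isHomogeneous_C_mul_X_pow _ j k

lemma coeff_sum_C_X_mul_seriesPderiv [Fintype σ] {f : (MvPolynomial σ ℂ)⟦X⟧}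
    (hf : f ∈ homogeneousCoeffs σ) (k : ℕ) :
    PowerSeries.coeff k (∑ j, PowerSeries.C (X j) * seriesPderiv j f)
      = k • PowerSeries.coeff k f := by
  simp only [map_sum, PowerSeries.coeff_C_mul, coeff_seriesPderiv]
  exact (hf k).sum_X_mul_pderiv

/-- The geometric series `1 / (1 - xᵢ w)`. -/
noncomputable def geomSeries (i : σ) : (MvPolynomial σ ℂ)⟦X⟧ :=
  scaledByVar i (PowerSeries.mk 1)

lemma C_X_mul_X_mul_geomSeries (i : σ) :
    PowerSeries.C (X i) * PowerSeries.X * geomSeries i = geomSeries i - 1 := by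
  have h := congrArg (scaledByVar i) (PowerSeries.mk_one_mul_one_sub_eq_one ℂ)
  rw [map_mul, map_sub, map_one, scaledByVar_X] at h
  rw [geomSeries]
  linear_combination -h

lemma geomSeries_sub_geomSeries (i l : σ) :
    geomSeries i - geomSeries l
      = PowerSeries.C (X i - X l) * (PowerSeries.X * geomSeries i * geomSeries l) := by
  rw [map_sub]
  linear_combination geomSeries i * C_X_mul_X_mul_geomSeries l
    - geomSeries l * C_X_mul_X_mul_geomSeries i

lemma seriesPderiv_geomSeries [DecidableEq σ] (j i : σ) :
    seriesPderiv j (geomSeries i)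
      = if j = i then PowerSeries.X * geomSeries i * geomSeries i else 0 := by
  split_ifs with h
  · rw [h, geomSeries, seriesPderiv_scaledByVar_self, derivative_mk_one, map_mul, mul_assoc]
  · exact seriesPderiv_scaledByVar_of_ne h _

section JackSeries

variable [Fintype σ]

noncomputable def prodOneSubPow (μ : ℂ) : (MvPolynomial σ ℂ)⟦X⟧ :=
  ∏ j, scaledByVar j (oneSubPow μ)

noncomputable def jackSeries (μ : ℂ) (i : σ) : (MvPolynomial σ ℂ)⟦X⟧ :=
  prodOneSubPow μ * geomSeries i

lemma prodOneSubPow_mem_homogeneousCoeffs (μ : ℂ) :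
    prodOneSubPow μ ∈ homogeneousCoeffs σ :=
  prod_mem fun j _ => scaledByVar_mem_homogeneousCoeffs j _

lemma jackSeries_mem_homogeneousCoeffs (μ : ℂ) (i : σ) :
    jackSeries μ i ∈ homogeneousCoeffs σ :=
  mul_mem (prodOneSubPow_mem_homogeneousCoeffs μ) (scaledByVar_mem_homogeneousCoeffs i _)

lemma map_rename_jackSeries (e : Equiv.Perm σ) (μ : ℂ) (i : σ) :
    PowerSeries.map (rename e).toRingHom (jackSeries μ i) = jackSeries μ (e i) := by
  simp only [jackSeries, prodOneSubPow, geomSeries, map_mul, map_prod, map_rename_scaledByVar]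
  rw [Equiv.prod_comp e (fun j => scaledByVar j (oneSubPow μ))]

lemma rename_coeff_jackSeries (e : Equiv.Perm σ) (μ : ℂ) (r : ℕ) (i : σ) :
    rename e (PowerSeries.coeff r (jackSeries μ i)) = PowerSeries.coeff r (jackSeries μ (e i)) := by
  rw [← map_rename_jackSeries, PowerSeries.coeff_map]
  rfl

lemma jackSeries_sub_jackSeries (μ : ℂ) (i l : σ) :
    jackSeries μ i - jackSeries μ l
      = PowerSeries.C (X i - X l) * (PowerSeries.X * geomSeries l * jackSeries μ i) := by
  rw [jackSeries, jackSeries, ← mul_sub, geomSeries_sub_geomSeries]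
  ring

lemma coeff_jackSeries_sub_coeff_jackSeries (μ : ℂ) (r : ℕ) (i l : σ) :
    PowerSeries.coeff r (jackSeries μ i) - PowerSeries.coeff r (jackSeries μ l)
      = (X i - X l) * PowerSeries.coeff r (PowerSeries.X * geomSeries l * jackSeries μ i) := by
  rw [← map_sub, jackSeries_sub_jackSeries, PowerSeries.coeff_C_mul]

variable [DecidableEq σ]

lemma seriesPderiv_prodOneSubPow (μ : ℂ) (j : σ) :
    seriesPderiv j (prodOneSubPow μ)
      = -μ • (PowerSeries.X * geomSeries j * prodOneSubPow μ) := by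
  have hrest : seriesPderiv j (∏ l ∈ Finset.univ.erase j, scaledByVar l (oneSubPow μ)) = 0 :=
    Derivation.map_prod_eq_zero _ _ _ fun l hl =>
      seriesPderiv_scaledByVar_of_ne (Finset.ne_of_mem_erase hl).symm _
  rw [prodOneSubPow, ← Finset.mul_prod_erase _ _ (Finset.mem_univ j), Derivation.leibniz, hrest,
    smul_zero, zero_add, seriesPderiv_scaledByVar_self, derivative_oneSubPow,
    ← mk_one_mul_oneSubPow, scaledByVar_smul, map_mul, smul_eq_mul, geomSeries]
  simp only [Algebra.smul_def]
  ring

lemma sum_mul_seriesPderiv_jackSeries (μ : ℂ) (i : σ) (a : σ → (MvPolynomial σ ℂ)⟦X⟧) :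
    ∑ j, a j * seriesPderiv j (jackSeries μ i)
      = a i * (PowerSeries.X * geomSeries i * jackSeries μ i)
        - μ • ∑ j, a j * (PowerSeries.X * geomSeries j * jackSeries μ i) := by
  have hderiv (j : σ) : seriesPderiv j (jackSeries μ i)
      = -μ • (PowerSeries.X * geomSeries j * jackSeries μ i)
        + if j = i then PowerSeries.X * geomSeries i * jackSeries μ i else 0 := by
    rw [jackSeries, Derivation.leibniz, smul_eq_mul, smul_eq_mul, seriesPderiv_geomSeries,
      seriesPderiv_prodOneSubPow]
    split_ifs with h
    · subst h; simp only [Algebra.smul_def]; ring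
    · simp only [Algebra.smul_def]; ring
  simp only [hderiv, mul_add, mul_ite, mul_zero, Finset.sum_add_distrib, Finset.sum_ite_eq',
    Finset.mem_univ, if_true, mul_smul_comm, ← Finset.smul_sum]
  module

lemma sum_C_X_mul_seriesPderiv_jackSeries (μ : ℂ) (i : σ) :
    ∑ j, PowerSeries.C (X j) * seriesPderiv j (jackSeries μ i)
      = geomSeries i * jackSeries μ i - μ • ∑ j, geomSeries j * jackSeries μ i
        + (μ * Fintype.card σ - 1) • jackSeries μ i := by
  have h (j : σ) : PowerSeries.C (X j) * (PowerSeries.X * geomSeries j * jackSeries μ i)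
      = geomSeries j * jackSeries μ i - jackSeries μ i := by
    rw [← mul_assoc, ← mul_assoc, C_X_mul_X_mul_geomSeries, sub_one_mul]
  rw [sum_mul_seriesPderiv_jackSeries]
  simp only [h, Finset.sum_sub_distrib, Finset.sum_const, Finset.card_univ]
  rw [← Nat.cast_smul_eq_nsmul ℂ]
  module

lemma sum_C_X_mul_seriesPderiv_prodOneSubPow (μ : ℂ) :
    ∑ j, PowerSeries.C (X j) * seriesPderiv j (prodOneSubPow (σ := σ) μ)
      = (μ * Fintype.card σ) • prodOneSubPow μ - μ • ∑ j, jackSeries μ j := by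
  have h (j : σ) : PowerSeries.C (X j) * seriesPderiv j (prodOneSubPow μ)
      = -μ • (jackSeries μ j - prodOneSubPow μ) := by
    rw [seriesPderiv_prodOneSubPow, mul_smul_comm, ← mul_assoc, ← mul_assoc,
      C_X_mul_X_mul_geomSeries, jackSeries]
    simp only [Algebra.smul_def]
    ring
  simp only [h, ← Finset.smul_sum, Finset.sum_sub_distrib, Finset.sum_const, Finset.card_univ]
  rw [← Nat.cast_smul_eq_nsmul ℂ]
  module

lemma coeff_X_mul_geomSeries_mul_jackSeries {μ : ℂ} {r : ℕ} (hμ : μ * Fintype.card σ = r)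
    (i : σ) :
    PowerSeries.coeff r (PowerSeries.X * geomSeries i * jackSeries μ i)
      = μ • ∑ j, PowerSeries.coeff r (PowerSeries.X * geomSeries j * jackSeries μ i) := by
  cases r with
  | zero => simp [mul_assoc]
  | succ r =>
    -- Euler's identity applied to `w ∑ⱼ xⱼ ∂ⱼ Qᵢ`; what remains is `(r + 1 - μ n) [w^r] Qᵢ`.
    have h := congrArg (PowerSeries.coeff (r + 1))
      (congrArg (PowerSeries.X * ·) (sum_C_X_mul_seriesPderiv_jackSeries μ i))
    simp only [PowerSeries.coeff_succ_X_mul, coeff_sum_C_X_mul_seriesPderiv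
      (jackSeries_mem_homogeneousCoeffs μ i), map_add, map_sub, PowerSeries.coeff_smul,
      map_sum, hμ] at h
    simp only [mul_assoc, PowerSeries.coeff_succ_X_mul]
    rw [← Nat.cast_smul_eq_nsmul ℂ] at h
    push_cast at h
    linear_combination (norm := module) -h

lemma smul_sum_coeff_jackSeries (μ : ℂ) (r : ℕ) :
    μ • ∑ i, PowerSeries.coeff r (jackSeries (σ := σ) μ i)
      = (μ * Fintype.card σ - r) • PowerSeries.coeff r (prodOneSubPow (σ := σ) μ) := by
  have h := congrArg (PowerSeries.coeff r) (sum_C_X_mul_seriesPderiv_prodOneSubPow (σ := σ) μ)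
  rw [coeff_sum_C_X_mul_seriesPderiv (prodOneSubPow_mem_homogeneousCoeffs μ),
    map_sub, PowerSeries.coeff_smul, PowerSeries.coeff_smul, map_sum,
    ← Nat.cast_smul_eq_nsmul ℂ] at h
  linear_combination (norm := module) h

lemma eval_single_coeff_jackSeries (μ : ℂ) (r : ℕ) (i : σ) :
    eval (Pi.single i 1) (PowerSeries.coeff r (jackSeries μ i))
      = (-1) ^ r * genBinom (μ - 1) r := by
  have hprod : PowerSeries.map (eval (Pi.single i 1)) (prodOneSubPow (σ := σ) μ) = oneSubPow μ := by
    rw [prodOneSubPow, map_prod, Finset.prod_eq_single i]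
    · simp [map_eval_scaledByVar]
    · intro j _ hj
      simp [map_eval_scaledByVar, hj, constantCoeff_oneSubPow]
    · simp
  rw [← PowerSeries.coeff_map, jackSeries, map_mul, hprod, geomSeries, map_eval_scaledByVar,
    Pi.single_eq_same, PowerSeries.rescale_one, RingHom.id_apply, mul_comm, mk_one_mul_oneSubPow]
  simp [oneSubPow]

lemma sum_C_mul_pderiv_coeff_jackSeries {μ : ℂ} {r : ℕ} (hμ : μ * Fintype.card σ = r)
    (y : σ → ℂ) (i : σ) :
    ∑ j, C (y j) * pderiv j (PowerSeries.coeff r (jackSeries μ i))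
      = C μ * ∑ l, C (y i - y l)
          * PowerSeries.coeff r (PowerSeries.X * geomSeries l * jackSeries μ i) := by
  have h := congrArg (PowerSeries.coeff r)
    (sum_mul_seriesPderiv_jackSeries μ i fun j => PowerSeries.C (C (y j)))
  simp only [map_sum, map_sub, PowerSeries.coeff_C_mul, PowerSeries.coeff_smul,
    coeff_seriesPderiv, coeff_X_mul_geomSeries_mul_jackSeries hμ] at h
  rw [h]
  simp only [map_sub, sub_mul, Finset.sum_sub_distrib, ← Finset.mul_sum, smul_eq_C_mul]
  ring

end JackSeries

end Dunkl

open Dunkl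

lemma jackVector_eq_coeff_jackSeries (n r : ℕ) (i : Fin n) :
    jackVector n r i = PowerSeries.coeff r (jackSeries ((r : ℂ) / n) i) := by
  have hprod (μ : ℂ) : prodBinomSeries n μ = prodOneSubPow μ :=
    Finset.prod_congr rfl fun j _ => by
      ext1 k
      simp [coeff_scaledByVar, oneSubPow]
  have hgeom : PowerSeries.mk (fun k => X i ^ k) = geomSeries (σ := Fin n) i := by
    ext1 k
    simp [geomSeries, coeff_scaledByVar]
  rw [jackVector, hprod, hgeom, jackSeries]

lemma jackVector_isHomogeneous (n r : ℕ) (i : Fin n) : (jackVector n r i).IsHomogeneous r := by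
  rw [jackVector_eq_coeff_jackSeries]
  exact jackSeries_mem_homogeneousCoeffs _ i r

lemma jackVector_ne_zero {n r : ℕ} (hnr : ¬ n ∣ r) (i : Fin n) : jackVector n r i ≠ 0 := by
  have hn : (n : ℂ) ≠ 0 := Nat.cast_ne_zero.mpr i.pos.ne'
  have hbinom : genBinom ((r : ℂ) / n - 1) r ≠ 0 := genBinom_ne_zero fun m _ hm => hnr
    ⟨m + 1, by
      rw [sub_eq_iff_eq_add, div_eq_iff hn] at hm
      exact_mod_cast hm.trans (mul_comm _ _)⟩
  intro h
  have := eval_single_coeff_jackSeries ((r : ℂ) / n) r i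
  rw [← jackVector_eq_coeff_jackSeries, h, map_zero] at this
  exact hbinom ((mul_eq_zero.mp this.symm).resolve_left (pow_ne_zero _ (by norm_num)))

lemma sum_jackVector_eq_zero (n : ℕ) {r : ℕ} (hr : r ≠ 0) : ∑ i, jackVector n r i = 0 := by
  rcases eq_or_ne n 0 with rfl | hn
  · simp
  have hn' : (n : ℂ) ≠ 0 := Nat.cast_ne_zero.mpr hn
  have h := smul_sum_coeff_jackSeries (σ := Fin n) ((r : ℂ) / n) r
  rw [Fintype.card_fin, div_mul_cancel₀ _ hn', sub_self, zero_smul] at h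
  simp only [jackVector_eq_coeff_jackSeries]
  exact (smul_eq_zero.mp h).resolve_left (div_ne_zero (Nat.cast_ne_zero.mpr hr) hn')

lemma dunklOperator_jackVector {n : ℕ} (r : ℕ) (K : Type*) [Field K] [Algebra ℂ K]
    [Algebra (MvPolynomial (Fin n) ℂ) K] [IsScalarTower ℂ (MvPolynomial (Fin n) ℂ) K]
    [IsFractionRing (MvPolynomial (Fin n) ℂ) K] (y : Fin n → ℂ) (i : Fin n) :
    dunklOperator K ((r : ℂ) / n) y (jackVector n r i) = 0 := by
  have hμ : (r : ℂ) / n * Fintype.card (Fin n) = r := by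
    rw [Fintype.card_fin, div_mul_cancel₀ _ (Nat.cast_ne_zero.mpr i.pos.ne')]
  refine dunklOperator_eq_zero i
    (fun l => PowerSeries.coeff r (PowerSeries.X * geomSeries l * jackSeries ((r : ℂ) / n) i))
    ?_ (fun l => ?_) (fun a b ha hb => ?_)
  · rw [jackVector_eq_coeff_jackSeries]
    exact sum_C_mul_pderiv_coeff_jackSeries hμ y i
  · rw [jackVector_eq_coeff_jackSeries, rename_coeff_jackSeries, Equiv.swap_apply_left]
    exact coeff_jackSeries_sub_coeff_jackSeries _ r i l
  · rw [jackVector_eq_coeff_jackSeries, rename_coeff_jackSeries,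
      Equiv.swap_apply_of_ne_of_ne ha.symm hb.symm]

theorem dunkl_singular_vectors_general (n r : ℕ) (hr : 0 < r) (hnr : ¬ n ∣ r)
    (K : Type) [Field K] [Algebra ℂ K]
    [Algebra (MvPolynomial (Fin n) ℂ) K] [IsScalarTower ℂ (MvPolynomial (Fin n) ℂ) K]
    [IsFractionRing (MvPolynomial (Fin n) ℂ) K] :
    (∀ i : Fin n, (jackVector n r i).IsHomogeneous r ∧ jackVector n r i ≠ 0) ∧
    (∑ i : Fin n, jackVector n r i = 0) ∧
    (∀ y : Fin n → ℂ, (∑ i : Fin n, y i) = 0 → ∀ i : Fin n,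
      algebraMap (MvPolynomial (Fin n) ℂ) K
          (∑ j : Fin n, MvPolynomial.C (y j) * MvPolynomial.pderiv j (jackVector n r i))
        - algebraMap ℂ K ((r : ℂ) / (n : ℂ)) *
            ∑ q ∈ Finset.univ.filter (fun q : Fin n × Fin n => q.1 < q.2),
              algebraMap ℂ K (y q.1 - y q.2) *
                (algebraMap (MvPolynomial (Fin n) ℂ) K
                    (jackVector n r i
                      - MvPolynomial.rename (Equiv.swap q.1 q.2) (jackVector n r i)) /
                  algebraMap (MvPolynomial (Fin n) ℂ) K
                    (MvPolynomial.X q.1 - MvPolynomial.X q.2))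
      = 0) :=
  ⟨fun i => ⟨jackVector_isHomogeneous n r i, jackVector_ne_zero hnr i⟩,
    sum_jackVector_eq_zero n hr.ne', fun y _ i => dunklOperator_jackVector r K y i⟩

/-- **C. Dunkl.**  Let `n ≥ 2` and let `r` be a positive integer not divisible by `n`; set
`c = r/n`.  The polynomials `fᵢ = jackVector n r i` are nonzero and homogeneous of degree
`r`, satisfy `Σᵢ fᵢ = 0`, and are singular vectors for the type `A` Dunkl operators with
parameter `c`: for every `y ∈ ℂⁿ` with `Σᵢ yᵢ = 0`, `D_y fᵢ = 0` (an identity in the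
fraction field `K` of `ℂ[x₁,…,xₙ]`), where
`D_y f = Σⱼ yⱼ ∂f/∂xⱼ − c Σ_{j<l} ((yⱼ−y_l)/(xⱼ−x_l))(f − s_{jl}·f)`. -/
theorem dunkl_singular_vectors (n r : ℕ) (hn : 2 ≤ n) (hr : 0 < r) (hnr : ¬ n ∣ r)
    (K : Type) [Field K] [Algebra ℂ K]
    [Algebra (MvPolynomial (Fin n) ℂ) K] [IsScalarTower ℂ (MvPolynomial (Fin n) ℂ) K]
    [IsFractionRing (MvPolynomial (Fin n) ℂ) K] :
    (∀ i : Fin n, (jackVector n r i).IsHomogeneous r ∧ jackVector n r i ≠ 0) ∧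
    (∑ i : Fin n, jackVector n r i = 0) ∧
    (∀ y : Fin n → ℂ, (∑ i : Fin n, y i) = 0 → ∀ i : Fin n,
      algebraMap (MvPolynomial (Fin n) ℂ) K
          (∑ j : Fin n, MvPolynomial.C (y j) * MvPolynomial.pderiv j (jackVector n r i))
        - algebraMap ℂ K ((r : ℂ) / (n : ℂ)) *
            ∑ q ∈ Finset.univ.filter (fun q : Fin n × Fin n => q.1 < q.2),
              algebraMap ℂ K (y q.1 - y q.2) *
                (algebraMap (MvPolynomial (Fin n) ℂ) K
                    (jackVector n r i
                      - MvPolynomial.rename (Equiv.swap q.1 q.2) (jackVector n r i)) /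
                  algebraMap (MvPolynomial (Fin n) ℂ) K
                    (MvPolynomial.X q.1 - MvPolynomial.X q.2))
      = 0) :=
  dunkl_singular_vectors_general n r hr hnr K
end

section
/- Let n ≥ 2, let r be a positive integer not divisible by n, let d = gcd(r, n), and for i = 1,…,n let f_i ∈ ℂ[x_1,…,x_n] be the coefficient of z^{−1} in the formal expansion at z = ∞ of [(z−x_1)⋯(z−x_n)]^{r/n}/(z−x_i). Then for a point (x_1,…,x_n) ∈ ℂ^n: f_i(x_1,…,x_n) = 0 for all i = 1,…,n if and only if there exists a monic polynomial g(z) of degree d such that (z−x_1)⋯(z−x_n) = g(z)^{n/d}. In particular, if gcd(r, n) = 1, the common zero set of f_1,…,f_n consists exactly of the points with x_1 = x_2 = ⋯ = x_n. -/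
open MvPolynomial Polynomial

/-!
Put `w = z⁻¹`, `p̃(w) = ∏ⱼ (1 - xⱼ w)` and `h = p̃ ^ (r/n)`, so that `fᵢ(x)` is the coefficient
of `w ^ r` in `h / (1 - xᵢ w)`.

If `p̃ = g̃ ^ (n/d)` with `deg g̃ ≤ d`, then `h = g̃ ^ (r/d)` is a polynomial of degree `≤ r`
divisible by every `1 - xᵢ w`, so all `fᵢ(x)` vanish.

Conversely, `fᵢ(x) = xᵢ ^ r · T(1/xᵢ)` for the truncation `T` of `h` at degree `r`, so `T` vanishes
at every root of `p̃`. As `h ^ n = p̃ ^ r`, `h` solves `n p̃ h' = r p̃' h`; hence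
`A = n p̃ T' - r p̃' T` is divisible by `w ^ r` and by `p̃`, while `deg A < r + deg p̃`, so `A = 0`.
Comparing orders of vanishing at a root `α` in `n p̃ T' = r p̃' T` gives
`n · ord_α T = r · ord_α p̃`, so `n/d` divides the multiplicity of every nonzero value among the
`xᵢ`; for the value `0` it follows from `n/d ∣ n`.
-/

theorem PowerSeries.binomialSeries_nsmul {R A : Type*} [CommRing R] [BinomialRing R] [Ring A]
    [Algebra R A] (k : ℕ) (μ : R) :
    binomialSeries A (k • μ) = binomialSeries A μ ^ k := by
  induction k with
  | zero => simp
  | succ k ih => rw [succ_nsmul, binomialSeries_add, ih, pow_succ]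

namespace PowerSeries

theorem one_sub_C_mul_X_mul_mk_pow {R : Type*} [CommRing R] (t : R) :
    (1 - C t * X) * mk (t ^ ·) = 1 := by
  simpa [rescale_mk, rescale_X, mul_comm] using
    congrArg (rescale t) (mk_one_mul_one_sub_eq_one R)

theorem coeff_mul_mk_pow {K : Type*} [Field K] (f : K⟦X⟧) {t : K} (ht : t ≠ 0)
    (r : ℕ) : coeff r (f * mk (t ^ ·)) = t ^ r * (trunc (r + 1) f).eval t⁻¹ := by
  rw [coeff_mul, Finset.Nat.sum_antidiagonal_eq_sum_range_succ_mk, Polynomial.eval,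
    eval₂_trunc_eq_sum_range, Finset.mul_sum]
  refine Finset.sum_congr rfl fun k hk => ?_
  rw [coeff_mk, RingHom.id_apply, inv_pow,
    pow_sub₀ t ht (Nat.lt_succ_iff.1 (Finset.mem_range.1 hk))]
  ring

theorem X_pow_dvd_sub_trunc {R : Type*} [CommRing R] (f : R⟦X⟧) (n : ℕ) :
    X ^ n ∣ f - (trunc n f : R⟦X⟧) := by
  refine X_pow_dvd_iff.2 fun m hm => ?_
  simp [coeff_trunc, hm]

theorem X_pow_dvd_derivative {R : Type*} [CommRing R] {f : R⟦X⟧} {n : ℕ}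
    (hf : X ^ (n + 1) ∣ f) : X ^ n ∣ derivative R f := by
  refine X_pow_dvd_iff.2 fun m hm => ?_
  rw [coeff_derivative, X_pow_dvd_iff.1 hf (m + 1) (by omega), zero_mul]

end PowerSeries

theorem Polynomial.X_pow_dvd_of_X_pow_dvd_coe {R : Type*} [CommRing R] {p : R[X]} {n : ℕ}
    (hp : PowerSeries.X ^ n ∣ (p : PowerSeries R)) : X ^ n ∣ p :=
  X_pow_dvd_iff.2 fun m hm => by
    rw [← coeff_coe]; exact PowerSeries.X_pow_dvd_iff.1 hp m hm

theorem Derivation.natCast_mul_eq_of_pow_eq_pow {R A : Type*} [CommRing R] [CommRing A]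
    [IsDomain A] [Algebra R A] (D : Derivation R A A) {f g : A} {n r : ℕ} (hn : n ≠ 0)
    (hr : r ≠ 0) (hg : g ≠ 0) (h : f ^ n = g ^ r) :
    n * g * D f = r * D g * f := by
  obtain ⟨n, rfl⟩ := Nat.exists_eq_add_one_of_ne_zero hn
  obtain ⟨r, rfl⟩ := Nat.exists_eq_add_one_of_ne_zero hr
  have hD := congrArg D h
  rw [D.leibniz_pow, D.leibniz_pow, Nat.add_sub_cancel, Nat.add_sub_cancel, smul_eq_mul,
    smul_eq_mul, nsmul_eq_mul, nsmul_eq_mul] at hD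
  have key : g ^ (r + 1) * ((n + 1 : ℕ) * g * D f - (r + 1 : ℕ) * D g * f) = 0 := by
    linear_combination (f * g) * hD - ((n + 1 : ℕ) * g * D f) * h
  exact sub_eq_zero.1 ((mul_eq_zero.1 key).resolve_left (pow_ne_zero _ hg))

theorem PowerSeries.X_pow_dvd_natCast_mul_derivative_trunc_sub {R : Type*} [CommRing R]
    {h : PowerSeries R} {p : R[X]} {N M : ℕ}
    (hode : (N : PowerSeries R) * p * derivative R h =
      M * (Polynomial.derivative p : PowerSeries R) * h) (r : ℕ) :
    Polynomial.X ^ r ∣ (N : R[X]) * p * Polynomial.derivative (trunc (r + 1) h)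
      - (M : R[X]) * Polynomial.derivative p * trunc (r + 1) h := by
  apply Polynomial.X_pow_dvd_of_X_pow_dvd_coe
  set E := h - (trunc (r + 1) h : PowerSeries R)
  have hE : X ^ (r + 1) ∣ E := X_pow_dvd_sub_trunc h (r + 1)
  have hsplit : (((N : R[X]) * p * Polynomial.derivative (trunc (r + 1) h)
      - (M : R[X]) * Polynomial.derivative p * trunc (r + 1) h : R[X]) : PowerSeries R) =
      -((N : PowerSeries R) * p * derivative R E -
        M * (Polynomial.derivative p : PowerSeries R) * E) := by
    rw [← Polynomial.coeToPowerSeries.ringHom_apply]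
    simp only [map_sub, map_mul, map_natCast, Polynomial.coeToPowerSeries.ringHom_apply, E,
      derivative_coe]
    linear_combination hode
  rw [hsplit, dvd_neg]
  exact dvd_sub ((X_pow_dvd_derivative hE).mul_left _)
    (((pow_dvd_pow X r.le_succ).trans hE).mul_left _)

namespace Polynomial

variable {K : Type*} [Field K]

theorem dvd_of_forall_pow_rootMultiplicity_dvd [IsAlgClosed K] {p q : K[X]} (hp : p ≠ 0)
    (h : ∀ α, (X - C α) ^ rootMultiplicity α p ∣ q) : p ∣ q := by
  classical
  rcases eq_or_ne q 0 with rfl | hq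
  · exact dvd_zero p
  rw [IsAlgClosed.dvd_iff_roots_le_roots hp hq, Multiset.le_iff_count]
  intro α
  rw [count_roots, count_roots]
  exact (le_rootMultiplicity_iff hq).2 (h α)

theorem dvd_natCast_mul_derivative_sub [IsAlgClosed K] {p T : K[X]} (hp : p ≠ 0)
    (hT : ∀ α, p.IsRoot α → T.IsRoot α) (N R : ℕ) :
    p ∣ (N : K[X]) * p * derivative T - (R : K[X]) * derivative p * T := by
  refine dvd_of_forall_pow_rootMultiplicity_dvd hp fun α => ?_
  have hpow := pow_rootMultiplicity_dvd p α
  rcases Nat.eq_zero_or_pos (rootMultiplicity α p) with h0 | hpos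
  · simp [h0]
  refine dvd_sub ((hpow.mul_left _).mul_right _) ?_
  rw [← Nat.sub_add_cancel hpos, pow_succ]
  exact mul_dvd_mul ((pow_sub_one_dvd_derivative_of_pow_dvd hpow).mul_left _)
    (dvd_iff_isRoot.2 (hT α ((rootMultiplicity_pos hp).1 hpos)))

theorem natDegree_natCast_mul_derivative_sub_lt {p T : K[X]} {r : ℕ} (hr : 0 < r)
    (hT : T.natDegree ≤ r) (N R : ℕ) :
    ((N : K[X]) * p * derivative T - (R : K[X]) * derivative p * T).natDegree <
      r + p.natDegree := by
  refine (natDegree_sub_le _ _).trans_lt (max_lt ?_ ?_)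
  · refine natDegree_mul_le.trans_lt ?_
    have := (natDegree_derivative_le T).trans (Nat.sub_le_sub_right hT 1)
    have : ((N : K[X]) * p).natDegree ≤ p.natDegree := natDegree_mul_le.trans (by simp)
    omega
  · rcases eq_or_ne p.natDegree 0 with hp | hp
    · simp [derivative_of_natDegree_zero hp]; omega
    refine natDegree_mul_le.trans_lt ?_
    have : ((R : K[X]) * derivative p).natDegree < p.natDegree :=
      (natDegree_mul_le.trans (by simp)).trans_lt (natDegree_derivative_lt hp)
    omega

theorem natCast_mul_derivative_sub_eq_zero [IsAlgClosed K] {p T : K[X]} {r : ℕ} (hr : 0 < r)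
    (hp : p.coeff 0 ≠ 0) (hT : T.natDegree ≤ r) (hroots : ∀ α, p.IsRoot α → T.IsRoot α)
    {N R : ℕ} (hX : X ^ r ∣ (N : K[X]) * p * derivative T - (R : K[X]) * derivative p * T) :
    (N : K[X]) * p * derivative T - (R : K[X]) * derivative p * T = 0 := by
  have hp0 : p ≠ 0 := fun h => hp (by simp [h])
  have hcop : IsCoprime (X ^ r) p :=
    ((irreducible_X.coprime_iff_not_dvd).2 fun h => hp (X_dvd_iff.1 h)).pow_left
  refine eq_zero_of_dvd_of_natDegree_lt
    (hcop.mul_dvd hX (dvd_natCast_mul_derivative_sub hp0 hroots N R)) ?_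
  rw [natDegree_mul (pow_ne_zero r X_ne_zero) hp0, natDegree_X_pow]
  exact natDegree_natCast_mul_derivative_sub_lt hr hT N R

-- The factor `X - C α` makes this hold for `s = 0` as well.
theorem X_sub_C_mul_derivative_pow_mul (α : K) (s : ℕ) (v : K[X]) :
    (X - C α) * derivative ((X - C α) ^ s * v) =
      (X - C α) ^ s * ((s : K[X]) * v + (X - C α) * derivative v) := by
  rcases s with _ | s
  · simp
  · rw [derivative_mul, derivative_X_sub_C_pow, map_natCast]
    push_cast
    ring

theorem natCast_mul_rootMultiplicity_eq [CharZero K] {p T : K[X]} (hp : p ≠ 0) (hT : T ≠ 0)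
    {N R : ℕ} (h : (N : K[X]) * p * derivative T = R * derivative p * T) (α : K) :
    N * rootMultiplicity α T = R * rootMultiplicity α p := by
  obtain ⟨u, hpu, hu⟩ := exists_eq_pow_rootMultiplicity_mul_and_not_dvd p hp α
  obtain ⟨v, hTv, hv⟩ := exists_eq_pow_rootMultiplicity_mul_and_not_dvd T hT α
  set m := rootMultiplicity α p
  set s := rootMultiplicity α T
  rw [hpu, hTv] at h
  have hdp := X_sub_C_mul_derivative_pow_mul α m u
  have hdT := X_sub_C_mul_derivative_pow_mul α s v
  have key : (X - C α) ^ (m + s) *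
      ((N : K[X]) * u * ((s : K[X]) * v + (X - C α) * derivative v)
        - (R : K[X]) * ((m : K[X]) * u + (X - C α) * derivative u) * v) = 0 := by
    linear_combination (X - C α) * h - (N * u * (X - C α) ^ m) * hdT
      + (R * v * (X - C α) ^ s) * hdp
  have hW := congrArg (eval α)
    ((mul_eq_zero.1 key).resolve_left (pow_ne_zero _ (X_sub_C_ne_zero α)))
  simp only [eval_sub, eval_mul, eval_add, eval_natCast, eval_X, eval_C, sub_self, zero_mul,
    add_zero, eval_zero] at hW
  have huv : u.eval α * v.eval α ≠ 0 :=
    mul_ne_zero (mt dvd_iff_isRoot.2 hu) (mt dvd_iff_isRoot.2 hv)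
  have hNR : ((N * s : ℕ) - (R * m : ℕ) : K) * (u.eval α * v.eval α) = 0 := by
    push_cast
    linear_combination hW
  exact_mod_cast sub_eq_zero.1 ((mul_eq_zero.1 hNR).resolve_right huv)

end Polynomial

theorem Nat.div_gcd_dvd_of_mul_eq_mul {n r m c : ℕ} (hn : 0 < n) (h : n * m = r * c) :
    n / Nat.gcd r n ∣ c := by
  have hg : 0 < Nat.gcd r n := Nat.gcd_pos_of_pos_right r hn
  refine (Nat.coprime_div_gcd_div_gcd hg).symm.dvd_of_dvd_mul_left ⟨m, ?_⟩
  refine Nat.eq_of_mul_eq_mul_left hg ?_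
  rw [← mul_assoc, ← mul_assoc, Nat.mul_div_cancel' (Nat.gcd_dvd_left r n),
    Nat.mul_div_cancel' (Nat.gcd_dvd_right r n), h]

theorem Multiset.dvd_count_of_dvd_card {α : Type*} [DecidableEq α] {s : Multiset α} {k : ℕ}
    (hk : k ∣ card s) (a : α) (h : ∀ b ≠ a, k ∣ s.count b) : k ∣ s.count a := by
  have hsum := Multiset.sum_count_eq_card (s := insert a s.toFinset) (m := s)
    fun b hb => Finset.mem_insert_of_mem (Multiset.mem_toFinset.2 hb)
  rw [← Finset.add_sum_erase _ _ (Finset.mem_insert_self a _)] at hsum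
  exact (Nat.dvd_add_left (Finset.dvd_sum fun b hb => h b (Finset.ne_of_mem_erase hb))).1
    (hsum ▸ hk)

theorem Multiset.exists_eq_card_nsmul_iff {α : Type*} {s : Multiset α} :
    (∃ B, s = card s • B) ↔ ∀ a ∈ s, ∀ b ∈ s, a = b := by
  constructor
  · rintro ⟨B, hB⟩ a ha b hb
    have hcard : card B = 1 := by
      have := congrArg card hB
      rw [card_nsmul] at this
      exact (Nat.mul_eq_left (card_pos_iff_exists_mem.2 ⟨a, ha⟩).ne').1 this.symm
    obtain ⟨c, rfl⟩ := card_eq_one.1 hcard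
    rw [hB, nsmul_singleton] at ha hb
    rw [eq_of_mem_replicate ha, eq_of_mem_replicate hb]
  · intro h
    rcases s.empty_or_exists_mem with rfl | ⟨a, ha⟩
    · exact ⟨0, rfl⟩
    exact ⟨{a}, by rw [nsmul_singleton, eq_replicate_card]; exact fun b hb => h b hb a ha⟩

theorem Polynomial.exists_monic_pow_eq_prod_X_sub_C_iff {R : Type*} [CommRing R] [IsDomain R]
    {s : Multiset R} {k d : ℕ} (hk : 0 < k) (hs : Multiset.card s = k * d) :
    (∃ g : R[X], g.Monic ∧ g.natDegree = d ∧ (s.map (X - C ·)).prod = g ^ k) ↔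
      ∃ B, s = k • B := by
  constructor
  · rintro ⟨g, -, -, hprod⟩
    refine ⟨g.roots, ?_⟩
    rw [← roots_multiset_prod_X_sub_C s, hprod, roots_pow]
  · rintro ⟨B, rfl⟩
    refine ⟨(B.map (X - C ·)).prod,
      monic_multiset_prod_of_monic _ _ fun a _ => monic_X_sub_C a, ?_,
      by rw [Multiset.map_nsmul, Multiset.prod_nsmul]⟩
    rw [natDegree_multiset_prod_X_sub_C_eq_card]
    rw [Multiset.card_nsmul] at hs
    exact Nat.eq_of_mul_eq_mul_left hk hs

theorem genBinom_eq_choose (μ : ℂ) (k : ℕ) : genBinom μ k = Ring.choose μ k := by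
  rw [Ring.choose_eq_smul, ← Polynomial.aeval_eq_smeval, Polynomial.aeval_def,
    ← Polynomial.eval_map, descPochhammer_map, descPochhammer_eval_eq_prod_range, genBinom,
    smul_eq_mul, div_eq_inv_mul]

/-- `binomProd μ s` is `∏_{a ∈ s} (1 - a X) ^ μ`. -/
noncomputable def binomProd (μ : ℂ) (s : Multiset ℂ) : PowerSeries ℂ :=
  (s.map fun a => PowerSeries.rescale (-a) (PowerSeries.binomialSeries ℂ μ)).prod

noncomputable def revProd (s : Multiset ℂ) : ℂ[X] :=
  (s.map fun a => 1 - Polynomial.C a * Polynomial.X).prod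

theorem constantCoeff_binomProd (μ : ℂ) (s : Multiset ℂ) :
    PowerSeries.constantCoeff (binomProd μ s) = 1 := by
  rw [binomProd, map_multiset_prod, Multiset.map_map]
  refine Multiset.prod_eq_one fun c hc => ?_
  obtain ⟨a, -, rfl⟩ := Multiset.mem_map.1 hc
  rw [Function.comp_apply, ← PowerSeries.coeff_zero_eq_constantCoeff_apply,
    PowerSeries.coeff_rescale, PowerSeries.coeff_zero_eq_constantCoeff_apply,
    PowerSeries.binomialSeries_constantCoeff, pow_zero, one_mul]

theorem binomProd_pow (μ : ℂ) (s : Multiset ℂ) (k : ℕ) :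
    binomProd μ s ^ k = binomProd (k * μ) s := by
  simp only [binomProd, ← Multiset.prod_map_pow, ← map_pow, ← PowerSeries.binomialSeries_nsmul,
    nsmul_eq_mul]

theorem binomProd_nsmul (μ : ℂ) (s : Multiset ℂ) (k : ℕ) :
    binomProd μ (k • s) = binomProd (k * μ) s := by
  rw [binomProd, Multiset.map_nsmul, Multiset.prod_nsmul, ← binomProd, binomProd_pow]

theorem binomProd_natCast (s : Multiset ℂ) (k : ℕ) :
    binomProd k s = ((revProd s ^ k : ℂ[X]) : PowerSeries ℂ) := by
  rw [revProd, ← Multiset.prod_map_pow, ← Polynomial.coeToPowerSeries.ringHom_apply,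
    map_multiset_prod, Multiset.map_map, binomProd]
  congr 1
  refine Multiset.map_congr rfl fun a _ => ?_
  simp [PowerSeries.rescale_X, sub_eq_add_neg]

@[simp]
theorem revProd_zero : revProd 0 = 1 := by simp [revProd]

@[simp]
theorem revProd_cons (a : ℂ) (s : Multiset ℂ) :
    revProd (a ::ₘ s) = (1 - Polynomial.C a * Polynomial.X) * revProd s := by
  simp [revProd]

theorem eval_zero_revProd (s : Multiset ℂ) : (revProd s).eval 0 = 1 := by
  induction s using Multiset.induction with
  | empty => simp
  | cons a s ih => simp [ih]

theorem revProd_ne_zero (s : Multiset ℂ) : revProd s ≠ 0 := fun h => by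
  simpa [h] using eval_zero_revProd s

theorem natDegree_revProd_le (s : Multiset ℂ) : (revProd s).natDegree ≤ Multiset.card s := by
  induction s using Multiset.induction with
  | empty => simp
  | cons a s ih =>
    rw [revProd_cons, Multiset.card_cons, add_comm]
    refine Polynomial.natDegree_mul_le.trans (add_le_add ?_ ih)
    refine (Polynomial.natDegree_sub_le _ _).trans (max_le (by simp) ?_)
    exact (Polynomial.natDegree_C_mul_le _ _).trans Polynomial.natDegree_X_le

theorem rootMultiplicity_inv_one_sub_C_mul_X {a : ℂ} (ha : a ≠ 0) (b : ℂ) :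
    rootMultiplicity a⁻¹ (1 - Polynomial.C b * Polynomial.X) = if a = b then 1 else 0 := by
  by_cases hb : b = 0
  · simp [hb, ha]
  have hfac : 1 - Polynomial.C b * Polynomial.X =
      Polynomial.C (-b) * (Polynomial.X - Polynomial.C b⁻¹) := by
    rw [mul_sub, ← Polynomial.C_mul, neg_mul, mul_inv_cancel₀ hb, Polynomial.C_neg,
      Polynomial.C_neg, map_one]
    ring
  rw [hfac, rootMultiplicity_mul (mul_ne_zero (by simpa using hb) (Polynomial.X_sub_C_ne_zero _)),
    rootMultiplicity_C, rootMultiplicity_X_sub_C, zero_add]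
  simp only [inv_inj]

theorem rootMultiplicity_inv_revProd {a : ℂ} (ha : a ≠ 0) (s : Multiset ℂ) :
    rootMultiplicity a⁻¹ (revProd s) = s.count a := by
  induction s using Multiset.induction with
  | empty => simp
  | cons b s ih =>
    rw [revProd_cons, rootMultiplicity_mul (mul_ne_zero ?_ (revProd_ne_zero s)), ih,
      rootMultiplicity_inv_one_sub_C_mul_X ha, Multiset.count_cons, add_comm]
    simpa only [revProd_cons, revProd_zero, mul_one] using revProd_ne_zero (b ::ₘ 0)

theorem eval_jackVector (n r : ℕ) (x : Fin n → ℂ) (i : Fin n) :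
    MvPolynomial.eval x (jackVector n r i) =
      PowerSeries.coeff r
        (binomProd (r / n) (Finset.univ.val.map x) * PowerSeries.mk (x i ^ ·)) := by
  rw [jackVector, ← PowerSeries.coeff_map, map_mul, prodBinomSeries, map_prod, binomProd,
    Multiset.map_map, ← Finset.prod_eq_multiset_prod]
  congr 2
  · refine Finset.prod_congr rfl fun j _ => ?_
    ext k
    simp [PowerSeries.coeff_rescale, genBinom_eq_choose]
    ring
  · ext k
    simp

theorem coeff_revProd_pow_mul_mk_pow_eq_zero {B : Multiset ℂ} {a : ℂ} (ha : a ∈ B) {k r : ℕ}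
    (hk : k ≠ 0) (hr : Multiset.card B * k ≤ r) :
    PowerSeries.coeff r (((revProd B ^ k : ℂ[X]) : PowerSeries ℂ) * PowerSeries.mk (a ^ ·)) =
      0 := by
  obtain ⟨k, rfl⟩ := Nat.exists_eq_add_one_of_ne_zero hk
  have hB : (revProd B : PowerSeries ℂ) =
      (1 - PowerSeries.C a * PowerSeries.X) * (revProd (B.erase a) : PowerSeries ℂ) := by
    rw [← Multiset.cons_erase ha, revProd_cons, Multiset.erase_cons_head]
    push_cast
    rfl
  have hdiv : ((revProd B ^ (k + 1) : ℂ[X]) : PowerSeries ℂ) * PowerSeries.mk (a ^ ·) =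
      ((revProd (B.erase a) * revProd B ^ k : ℂ[X]) : PowerSeries ℂ) := by
    push_cast
    linear_combination ((revProd B : PowerSeries ℂ) ^ k * PowerSeries.mk (a ^ ·)) * hB +
      ((revProd B : PowerSeries ℂ) ^ k * revProd (B.erase a)) *
        PowerSeries.one_sub_C_mul_X_mul_mk_pow a
  rw [hdiv, Polynomial.coeff_coe]
  refine coeff_eq_zero_of_natDegree_lt (natDegree_mul_le.trans_lt ?_)
  have h1 := natDegree_revProd_le (B.erase a)
  have h2 := (natDegree_pow_le (p := revProd B) (n := k)).trans
    (Nat.mul_le_mul_left k (natDegree_revProd_le B))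
  obtain ⟨c, hc⟩ :=
    Nat.exists_eq_add_one_of_ne_zero (Multiset.card_pos_iff_exists_mem.2 ⟨a, ha⟩).ne'
  rw [Multiset.card_erase_of_mem ha, hc, Nat.pred_succ] at h1
  rw [hc] at h2 hr
  nlinarith

theorem isRoot_trunc_of_isRoot_revProd {s : Multiset ℂ} {f : PowerSeries ℂ} {r : ℕ}
    (h : ∀ a ∈ s, PowerSeries.coeff r (f * PowerSeries.mk (a ^ ·)) = 0) {α : ℂ}
    (hα : (revProd s).IsRoot α) : (PowerSeries.trunc (r + 1) f).IsRoot α := by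
  have hα0 : α ≠ 0 := by
    rintro rfl
    simp [IsRoot, eval_zero_revProd] at hα
  have hmem : α⁻¹ ∈ s := by
    rw [← Multiset.count_pos, ← rootMultiplicity_inv_revProd (inv_ne_zero hα0), inv_inv]
    exact (rootMultiplicity_pos (revProd_ne_zero s)).2 hα
  have hcoeff := h _ hmem
  rw [PowerSeries.coeff_mul_mk_pow f (inv_ne_zero hα0), inv_inv] at hcoeff
  exact (mul_eq_zero.1 hcoeff).resolve_left (pow_ne_zero _ (inv_ne_zero hα0))

theorem dvd_count_of_coeff_binomProd_mul_mk_pow_eq_zero {s : Multiset ℂ} (hs : s ≠ 0) {r : ℕ}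
    (hr : 0 < r)
    (h : ∀ a ∈ s, PowerSeries.coeff r
      (binomProd (r / Multiset.card s) s * PowerSeries.mk (a ^ ·)) = 0) (a : ℂ) :
    Multiset.card s / Nat.gcd r (Multiset.card s) ∣ s.count a := by
  set n := Multiset.card s
  have hn : 0 < n := Multiset.card_pos.2 hs
  set f := binomProd (r / n) s
  set p := revProd s
  set T := PowerSeries.trunc (r + 1) f
  have hp : p ≠ 0 := revProd_ne_zero s
  have hpow : f ^ n = (p : PowerSeries ℂ) ^ r := by
    rw [binomProd_pow, mul_div_cancel₀ _ (Nat.cast_ne_zero.2 hn.ne'), binomProd_natCast,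
      Polynomial.coe_pow]
  have hode : (n : PowerSeries ℂ) * p * PowerSeries.derivative ℂ f =
      r * (derivative p : PowerSeries ℂ) * f := by
    rw [← PowerSeries.derivative_coe]
    exact (PowerSeries.derivative ℂ).natCast_mul_eq_of_pow_eq_pow hn.ne' hr.ne'
      (mt Polynomial.coe_eq_zero_iff.1 hp) hpow
  have hroots : ∀ α, p.IsRoot α → T.IsRoot α := fun α => isRoot_trunc_of_isRoot_revProd h
  have hT0 : T.coeff 0 = 1 := by
    simp [T, PowerSeries.coeff_trunc, f, constantCoeff_binomProd]
  have hT : T ≠ 0 := fun h0 => by simp [h0] at hT0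
  have hA := natCast_mul_derivative_sub_eq_zero hr
    (by rw [coeff_zero_eq_eval_zero, eval_zero_revProd]; exact one_ne_zero)
    (Nat.lt_succ_iff.1 (PowerSeries.natDegree_trunc_lt f r)) hroots
    (PowerSeries.X_pow_dvd_natCast_mul_derivative_trunc_sub hode r)
  have hne : ∀ b ≠ 0, n / Nat.gcd r n ∣ s.count b := fun b hb =>
    Nat.div_gcd_dvd_of_mul_eq_mul hn <| by
      rw [← rootMultiplicity_inv_revProd hb]
      exact natCast_mul_rootMultiplicity_eq hp hT (sub_eq_zero.1 hA) b⁻¹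
  rcases eq_or_ne a 0 with rfl | ha
  · exact Multiset.dvd_count_of_dvd_card (Nat.div_dvd_of_dvd (Nat.gcd_dvd_right r n)) 0 hne
  · exact hne a ha

theorem coeff_binomProd_nsmul_mul_mk_pow_eq_zero {B : Multiset ℂ} {a : ℂ} (ha : a ∈ B)
    {k m r : ℕ} (hm : m ≠ 0) (hr : Multiset.card B * m ≤ r) {μ : ℂ} (hμ : k * μ = m) :
    PowerSeries.coeff r (binomProd μ (k • B) * PowerSeries.mk (a ^ ·)) = 0 := by
  rw [binomProd_nsmul, hμ, binomProd_natCast]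
  exact coeff_revProd_pow_mul_mk_pow_eq_zero ha hm hr

theorem eval_jackVector_eq_zero_iff {n r : ℕ} (hn : n ≠ 0) (hr : 0 < r) (x : Fin n → ℂ) :
    (∀ i, MvPolynomial.eval x (jackVector n r i) = 0) ↔
      ∃ B, Finset.univ.val.map x = (n / Nat.gcd r n) • B := by
  simp only [eval_jackVector]
  set M := Finset.univ.val.map x
  have hM : Multiset.card M = n := by simp [M]
  have hg : 0 < Nat.gcd r n := Nat.gcd_pos_of_pos_left n hr
  constructor
  · intro h
    refine Multiset.exists_smul_of_dvd_count M fun a _ => hM ▸ ?_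
    refine dvd_count_of_coeff_binomProd_mul_mk_pow_eq_zero
      (Multiset.card_pos.1 (hM ▸ Nat.pos_of_ne_zero hn)) hr (fun b hb => ?_) a
    obtain ⟨i, -, rfl⟩ := Multiset.mem_map.1 hb
    exact hM ▸ h i
  · rintro ⟨B, hB⟩ i
    have hk : n / Nat.gcd r n ≠ 0 :=
      (Nat.div_pos (Nat.gcd_le_right r (Nat.pos_of_ne_zero hn)) hg).ne'
    have hcard : Multiset.card B = Nat.gcd r n := by
      have := congrArg Multiset.card hB
      rw [hM, Multiset.card_nsmul] at this
      exact Nat.eq_of_mul_eq_mul_left (Nat.pos_of_ne_zero hk)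
        (by rw [← this, Nat.div_mul_cancel (Nat.gcd_dvd_right r n)])
    have hxi : x i ∈ (n / Nat.gcd r n) • B :=
      hB ▸ Multiset.mem_map_of_mem x (Finset.mem_univ_val i)
    rw [hB]
    refine coeff_binomProd_nsmul_mul_mk_pow_eq_zero (Multiset.mem_nsmul.1 hxi).2
      (Nat.div_pos (Nat.gcd_le_left n hr) hg).ne'
      (by rw [hcard, Nat.mul_div_cancel' (Nat.gcd_dvd_left r n)]) ?_
    rw [Nat.cast_div (Nat.gcd_dvd_right r n) (by exact_mod_cast hg.ne'),
      Nat.cast_div (Nat.gcd_dvd_left r n) (by exact_mod_cast hg.ne')]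
    field_simp

theorem jack_vector_common_zeros_general (n r : ℕ) (hn : 2 ≤ n) (hr : 0 < r) :
    (∀ x : Fin n → ℂ,
      ((∀ i : Fin n, MvPolynomial.eval x (jackVector n r i) = 0) ↔
        ∃ g : Polynomial ℂ, g.Monic ∧ g.natDegree = Nat.gcd r n ∧
          (∏ i : Fin n, (Polynomial.X - Polynomial.C (x i))) = g ^ (n / Nat.gcd r n))) ∧
    (Nat.gcd r n = 1 →
      ∀ x : Fin n → ℂ,
        ((∀ i : Fin n, MvPolynomial.eval x (jackVector n r i) = 0) ↔
          ∀ i j : Fin n, x i = x j)) := by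
  have hn0 : n ≠ 0 := by omega
  refine ⟨fun x => ?_, fun hg x => ?_⟩
  · have hk : 0 < n / Nat.gcd r n :=
      Nat.div_pos (Nat.gcd_le_right r hn0.bot_lt) (Nat.gcd_pos_of_pos_left n hr)
    have hprod : ∏ i, (Polynomial.X - Polynomial.C (x i)) =
        ((Finset.univ.val.map x).map (Polynomial.X - Polynomial.C ·)).prod := by
      rw [Multiset.map_map]; rfl
    rw [eval_jackVector_eq_zero_iff hn0 hr, hprod,
      Polynomial.exists_monic_pow_eq_prod_X_sub_C_iff hk
        (by simp [Nat.div_mul_cancel (Nat.gcd_dvd_right r n)])]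
  · have hconst := Multiset.exists_eq_card_nsmul_iff (s := Finset.univ.val.map x)
    rw [Multiset.card_map, Finset.card_val, Finset.card_univ, Fintype.card_fin] at hconst
    rw [eval_jackVector_eq_zero_iff hn0 hr, hg, Nat.div_one, hconst]
    simp

/-- Let `n ≥ 2`, let `r` be a positive integer not divisible by `n`, and let
`d = gcd(r,n)`.  A point `(x₁,…,xₙ) ∈ ℂⁿ` is a common zero of the singular vectors
`f₁,…,fₙ` (`fᵢ = jackVector n r i`) if and only if `(z−x₁)⋯(z−xₙ)` is the `(n/d)`-th power
of a monic polynomial of degree `d`.  In particular, if `gcd(r,n) = 1` the common zero set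
consists exactly of the points with `x₁ = x₂ = ⋯ = xₙ`. -/
theorem jack_vector_common_zeros (n r : ℕ) (hn : 2 ≤ n) (hr : 0 < r) (hnr : ¬ n ∣ r) :
    (∀ x : Fin n → ℂ,
      ((∀ i : Fin n, MvPolynomial.eval x (jackVector n r i) = 0) ↔
        ∃ g : Polynomial ℂ, g.Monic ∧ g.natDegree = Nat.gcd r n ∧
          (∏ i : Fin n, (Polynomial.X - Polynomial.C (x i))) = g ^ (n / Nat.gcd r n))) ∧
    (Nat.gcd r n = 1 →
      ∀ x : Fin n → ℂ,
        ((∀ i : Fin n, MvPolynomial.eval x (jackVector n r i) = 0) ↔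
          ∀ i j : Fin n, x i = x j)) :=
  jack_vector_common_zeros_general n r hn hr
end

section
/- Let X, Y ∈ Mat_n(ℂ) be such that rank(XY − YX + I) = 1. Then the pair (X, Y) is irreducible: the only linear subspaces W ⊆ ℂ^n invariant under both X and Y are W = 0 and W = ℂ^n. Consequently (by Schur's lemma), any matrix B ∈ Mat_n(ℂ) commuting with both X and Y is a scalar multiple of the identity, i.e. PGL_n(ℂ) acts freely on the set of such pairs. -/
/-!
Commutators are traceless, so `T = XY - YX + 1` restricted to a common invariant subspace `W`
has trace `dim W`. Since `T` has rank one, its range either lies in `W`, and then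
`tr (T|_W) = tr T = n`, or meets `W` trivially, and then `T|_W = 0`; hence `dim W ∈ {0, n}`.
For the second part, an eigenspace of `B` is invariant under `X` and `Y`, hence the whole space.
-/

open Module LinearMap

theorem LinearMap.trace_mul_sub_mul_add_one {R M : Type*} [CommRing R] [AddCommGroup M]
    [Module R M] [Module.Free R M] [Module.Finite R M] (f g : End R M) :
    trace R M (f * g - g * f + 1) = finrank R M := by
  rw [map_add, map_sub, trace_mul_comm, sub_self, zero_add, trace_one]

section

variable {K V : Type*} [Field K] [AddCommGroup V] [Module K V]

theorem Submodule.le_or_inf_eq_bot_of_finrank_le_one {U : Submodule K V} [FiniteDimensional K U]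
    (hU : finrank K U ≤ 1) (W : Submodule K V) : U ≤ W ∨ U ⊓ W = ⊥ := by
  rcases Nat.le_one_iff_eq_zero_or_eq_one.mp
      ((Submodule.finrank_mono (inf_le_left : U ⊓ W ≤ U)).trans hU) with h0 | h1
  · exact .inr (Submodule.finrank_eq_zero.mp h0)
  · exact .inl <| (Submodule.eq_of_le_of_finrank_le inf_le_left (h1 ▸ hU)) ▸ inf_le_right

theorem Submodule.eq_bot_or_eq_top_of_finrank_range_mul_sub_mul_add_one_le_one [CharZero K]
    [FiniteDimensional K V] {f g : End K V} (hfg : finrank K (range (f * g - g * f + 1)) ≤ 1)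
    {W : Submodule K V} (hf : ∀ v ∈ W, f v ∈ W) (hg : ∀ v ∈ W, g v ∈ W) : W = ⊥ ∨ W = ⊤ := by
  set T := f * g - g * f + 1
  have hT : ∀ v ∈ W, T v ∈ W := fun v hv =>
    add_mem (sub_mem (hf _ (hg v hv)) (hg _ (hf v hv))) hv
  have htrace : trace K W (T.restrict hT) = finrank K W := by
    have : T.restrict hT = f.restrict hf * g.restrict hg - g.restrict hg * f.restrict hf + 1 := rfl
    rw [this, trace_mul_sub_mul_add_one]
  rcases (range T).le_or_inf_eq_bot_of_finrank_le_one hfg W with hle | hbot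
  · refine .inr (Submodule.eq_top_of_finrank_eq ?_)
    have := trace_restrict_eq_of_forall_mem W T (fun v => hle (mem_range_self T v)) hT
    exact_mod_cast htrace.symm.trans (this.trans (trace_mul_sub_mul_add_one f g))
  · have hzero : T.restrict hT = 0 := by
      ext w
      have : T w ∈ range T ⊓ W := ⟨mem_range_self T w, hT w w.2⟩
      simpa [hbot] using this
    rw [hzero, map_zero] at htrace
    exact .inl (Submodule.finrank_eq_zero.mp (by exact_mod_cast htrace.symm))

theorem Module.End.exists_eq_smul_one_of_commute [IsAlgClosed K] [FiniteDimensional K V]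
    {f g B : End K V}
    (hirr : ∀ W : Submodule K V, (∀ v ∈ W, f v ∈ W) → (∀ v ∈ W, g v ∈ W) → W = ⊥ ∨ W = ⊤)
    (hf : Commute B f) (hg : Commute B g) : ∃ c : K, B = c • 1 := by
  cases subsingleton_or_nontrivial V
  · exact ⟨0, Subsingleton.elim _ _⟩
  obtain ⟨c, hc⟩ := B.exists_eigenvalue
  rcases hirr (B.eigenspace c) (fun v hv => End.mapsTo_genEigenspace_of_comm hf c 1 hv)
    (fun v hv => End.mapsTo_genEigenspace_of_comm hg c 1 hv) with hbot | htop
  · exact absurd hbot hc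
  · exact ⟨c, LinearMap.ext fun v => End.mem_eigenspace_iff.mp (htop ▸ Submodule.mem_top)⟩

end

/-- If `X, Y` are `n × n` complex matrices such that `rank(XY − YX + I) = 1`, then the pair
`(X, Y)` is irreducible: the only subspaces of `ℂⁿ` invariant under both `X` and `Y` are `0`
and `ℂⁿ`.  Consequently (Schur's lemma), any matrix commuting with both `X` and `Y` is a
scalar, i.e. `PGL_n(ℂ)` acts freely on the set of such pairs. -/
theorem calogero_moser_pair_irreducible (n : ℕ) (X Y : Matrix (Fin n) (Fin n) ℂ)
    (h : Matrix.rank (X * Y - Y * X + 1) = 1) :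
    (∀ W : Submodule ℂ (Fin n → ℂ),
        (∀ v ∈ W, X.mulVec v ∈ W) → (∀ v ∈ W, Y.mulVec v ∈ W) → W = ⊥ ∨ W = ⊤) ∧
    (∀ B : Matrix (Fin n) (Fin n) ℂ,
        B * X = X * B → B * Y = Y * B → ∃ c : ℂ, B = c • (1 : Matrix (Fin n) (Fin n) ℂ)) := by
  let e := Matrix.toLinAlgEquiv' (R := ℂ) (n := Fin n)
  have hrank : finrank ℂ (range (e X * e Y - e Y * e X + 1)) ≤ 1 := by
    rw [← map_mul, ← map_mul, ← map_sub, ← map_one e, ← map_add]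
    exact h.le
  have hirr : ∀ W : Submodule ℂ (Fin n → ℂ),
      (∀ v ∈ W, e X v ∈ W) → (∀ v ∈ W, e Y v ∈ W) → W = ⊥ ∨ W = ⊤ := fun _ hX hY =>
    Submodule.eq_bot_or_eq_top_of_finrank_range_mul_sub_mul_add_one_le_one hrank hX hY
  refine ⟨hirr, fun B hBX hBY => ?_⟩
  obtain ⟨c, hc⟩ := End.exists_eq_smul_one_of_commute hirr (Commute.map hBX e)
    (Commute.map hBY e)
  exact ⟨c, e.injective (by rw [hc, map_smul, map_one])⟩
end

section
/- Let A, B ∈ Mat_n(ℂ) be square matrices such that the commutator AB − BA has rank at most 1. Then A and B are simultaneously triangularizable: there exists an invertible matrix P ∈ GL_n(ℂ) such that both P^{−1}AP and P^{−1}BP are upper triangular. -/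
/-!
Induct on the dimension. Let `a` be an eigenvalue of `f`. Either `g` preserves the eigenspace
`ker (f - a)`, and an eigenvector of `g` there is a common eigenvector, or some `a`-eigenvector
`x` has `g x` outside it; then `⁅f, g⁆ x = (f - a) (g x) ≠ 0` spans the range of `⁅f, g⁆`, so the
proper subspace `range (f - a)` is invariant under `f` and `g` and we recurse into it. Applied to
the dual maps this yields a common invariant hyperplane; restricting to it and appending one vector
outside it builds, again by induction, a basis whose flag both maps preserve.
-/

open Module Submodule

namespace Module.Basis

variable {R M : Type*} {n : ℕ}

section Ring

variable [Ring R] [AddCommGroup M] [Module R M] {N : Submodule R M} (b : Basis (Fin n) R N)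
  (y : M) (hli : ∀ c : R, ∀ x ∈ N, c • y + x = 0 → c = 0) (hsp : ∀ z : M, ∃ c : R, z + c • y ∈ N)

lemma map_flag_le_flag_mkFinSnoc (k : Fin (n + 1)) :
    (b.flag k).map N.subtype ≤ (b.mkFinSnoc y hli hsp).flag k.castSucc := by
  rw [map_le_iff_le_comap, flag_le_iff]
  intro i hi
  simpa [coe_mkFinSnoc] using
    (b.mkFinSnoc y hli hsp).self_mem_flag (Fin.castSucc_lt_castSucc_iff.mpr hi)

lemma apply_mkFinSnoc_mem_flag {f : Module.End R M} (hf : Set.MapsTo f N N)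
    (hb : ∀ j, f.restrict hf (b j) ∈ b.flag j.succ) (j : Fin (n + 1)) :
    f (b.mkFinSnoc y hli hsp j) ∈ (b.mkFinSnoc y hli hsp).flag j.succ := by
  induction j using Fin.lastCases with
  | last => rw [Fin.succ_last, flag_last]; exact mem_top
  | cast i =>
    rw [Fin.succ_castSucc]
    refine map_flag_le_flag_mkFinSnoc b y hli hsp i.succ ⟨_, hb i, ?_⟩
    rw [coe_mkFinSnoc, Fin.snoc_castSucc]
    rfl

end Ring

lemma toMatrix_blockTriangular_of_mem_flag [CommRing R] [AddCommGroup M] [Module R M]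
    (b : Basis (Fin n) R M) {f : Module.End R M} (hf : ∀ j, f (b j) ∈ b.flag j.succ) :
    (LinearMap.toMatrix b b f).BlockTriangular id := by
  intro i j hij
  rw [LinearMap.toMatrix_apply]
  exact b.flag_le_ker_coord (Fin.succ_le_castSucc_iff.mpr hij) (hf j)

lemma exists_units_inv_mul_mul_eq_toMatrix {ι : Type*} [Fintype ι] [DecidableEq ι] [CommRing R]
    (b : Basis ι R (ι → R)) :
    ∃ P : (Matrix ι ι R)ˣ, ∀ A : Matrix ι ι R,
      (↑P⁻¹ : Matrix ι ι R) * A * (P : Matrix ι ι R) = LinearMap.toMatrix b b (Matrix.toLin' A) :=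
  ⟨⟨_, _, toMatrix_mul_toMatrix_flip (Pi.basisFun R ι) b, toMatrix_mul_toMatrix_flip b _⟩,
    fun A ↦ by
      simpa [LinearMap.toMatrix_eq_toMatrix'] using
        basis_toMatrix_mul_linearMap_toMatrix_mul_basis_toMatrix b (Pi.basisFun R ι) b
          (Pi.basisFun R ι) (Matrix.toLin' A)⟩

end Module.Basis

lemma Matrix.rank_eq_finrank_range_lie_toLin' {ι R : Type*} [Fintype ι] [DecidableEq ι]
    [CommRing R] (A B : Matrix ι ι R) :
    (A * B - B * A).rank = finrank R (LinearMap.range ⁅toLin' A, toLin' B⁆) := by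
  rw [Ring.lie_def, End.mul_eq_comp, End.mul_eq_comp, ← toLin'_mul, ← toLin'_mul, ← map_sub]
  rfl

namespace Module.End

open LinearMap

section CommRing

variable {R M : Type*} [CommRing R] [AddCommGroup M] [Module R M]

lemma mapsTo_ker_of_comp_eq_smul {f : End R M} {φ : Dual R M} {a : R} (h : φ ∘ₗ f = a • φ) :
    Set.MapsTo f (ker φ) (ker φ) := by
  intro x hx
  rw [SetLike.mem_coe, mem_ker] at hx ⊢
  rw [← comp_apply, h, LinearMap.smul_apply, hx, smul_zero]

lemma HasEigenvector.of_restrict {f : End R M} {W : Submodule R M} (hf : Set.MapsTo f W W)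
    {a : R} {w : W} (h : HasEigenvector (f.restrict hf) a w) : f.HasEigenvector a w := by
  obtain ⟨hw, hw0⟩ := hasEigenvector_iff.mp h
  exact hasEigenvector_iff.mpr
    ⟨eigenspace_restrict_le_eigenspace f hf a ⟨w, hw, rfl⟩, by simpa using hw0⟩

lemma mapsTo_range_sub_smul_of_range_lie_le {f g : End R M} {a : R}
    (h : range ⁅f, g⁆ ≤ range (f - a • 1)) :
    Set.MapsTo g (range (f - a • 1 : End R M)) (range (f - a • 1 : End R M)) := by
  rintro _ ⟨z, rfl⟩
  have hcomm : g ((f - a • 1) z) = (f - a • 1) (g z) - ⁅f, g⁆ z := by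
    simp [Ring.lie_def, map_sub]
  rw [hcomm]
  exact sub_mem (mem_range_self _ _) (h (mem_range_self _ z))

end CommRing

variable {K V : Type*} [Field K] [AddCommGroup V] [Module K V] [FiniteDimensional K V]

lemma finrank_range_lie_restrict_le {f g : End K V} {W : Submodule K V}
    (hf : Set.MapsTo f W W) (hg : Set.MapsTo g W W) :
    finrank K (range ⁅f.restrict hf, g.restrict hg⁆) ≤ finrank K (range ⁅f, g⁆) := by
  rw [← finrank_map_subtype_eq]
  refine Submodule.finrank_mono ?_
  rintro _ ⟨_, ⟨z, rfl⟩, rfl⟩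
  exact ⟨z, by simp only [Ring.lie_def]; rfl⟩

lemma range_lie_le_range_sub_smul {f g : End K V} {a : K} {x : V}
    (hx : x ∈ f.eigenspace a) (hgx : g x ∉ f.eigenspace a) (h : finrank K (range ⁅f, g⁆) ≤ 1) :
    range ⁅f, g⁆ ≤ range (f - a • 1) := by
  have hlie : ⁅f, g⁆ x = (f - a • 1) (g x) := by
    simp [Ring.lie_def, mem_eigenspace_iff.mp hx]
  have hne : ⁅f, g⁆ x ≠ 0 := by
    rwa [hlie, Ne, ← LinearMap.mem_ker, ← eigenspace_def]
  have hspan : K ∙ ⁅f, g⁆ x = range ⁅f, g⁆ :=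
    eq_of_le_of_finrank_le ((span_singleton_le_iff_mem _ _).mpr (mem_range_self _ x))
      (by rwa [finrank_span_singleton hne])
  rw [← hspan, span_singleton_le_iff_mem, hlie]
  exact mem_range_self _ _

theorem exists_common_eigenvector_of_finrank_range_lie_le_one [IsAlgClosed K] [Nontrivial V]
    {f g : End K V} (h : finrank K (range ⁅f, g⁆) ≤ 1) :
    ∃ v a b, f.HasEigenvector a v ∧ g.HasEigenvector b v := by
  induction hn : finrank K V using Nat.strong_induction_on generalizing V with
  | _ n ih =>
  obtain ⟨a, ha⟩ := f.exists_eigenvalue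
  by_cases hE : Set.MapsTo g (f.eigenspace a) (f.eigenspace a)
  · have : Nontrivial (f.eigenspace a) := nontrivial_iff_ne_bot.mpr (hasEigenvalue_iff.mp ha)
    obtain ⟨b, hb⟩ := exists_eigenvalue (g.restrict hE)
    obtain ⟨w, hw⟩ := hb.exists_hasEigenvector
    exact ⟨w, a, b, hasEigenvector_iff.mpr ⟨w.2, by simpa using hw.2⟩, hw.of_restrict hE⟩
  obtain ⟨x, hx, hgx⟩ : ∃ x ∈ f.eigenspace a, g x ∉ f.eigenspace a := by
    simpa [Set.MapsTo] using hE
  set W := range (f - a • 1 : End K V)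
  have hfW : Set.MapsTo f W W :=
    mapsTo_range_sub_smul_of_range_lie_le (g := f) (by simp [Ring.lie_def])
  have hgW : Set.MapsTo g W W :=
    mapsTo_range_sub_smul_of_range_lie_le (range_lie_le_range_sub_smul hx hgx h)
  have : Nontrivial W := by
    refine nontrivial_iff_ne_bot.mpr fun hW ↦ hgx ?_
    rw [eigenspace_def, range_eq_bot.mp hW, ker_zero]
    exact mem_top
  have hWV : finrank K W < n := by
    have hrank : finrank K W + finrank K (f.eigenspace a) = n := by
      rw [eigenspace_def, ← hn]
      exact finrank_range_add_finrank_ker _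
    have hker : 1 ≤ finrank K (f.eigenspace a) :=
      one_le_finrank_iff.mpr (hasEigenvalue_iff.mp ha)
    omega
  obtain ⟨w, a', b', hfw, hgw⟩ :=
    ih _ hWV ((finrank_range_lie_restrict_le hfW hgW).trans h) rfl
  exact ⟨w, a', b', hfw.of_restrict hfW, hgw.of_restrict hgW⟩

theorem exists_dual_common_eigenvector [IsAlgClosed K] [Nontrivial V] {f g : End K V}
    (h : finrank K (range ⁅f, g⁆) ≤ 1) :
    ∃ φ : Dual K V, φ ≠ 0 ∧ ∃ a b : K, φ ∘ₗ f = a • φ ∧ φ ∘ₗ g = b • φ := by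
  have hdual : ⁅f.dualMap, g.dualMap⁆ = -⁅f, g⁆.dualMap := by
    ext φ x
    simp [Ring.lie_def]
  obtain ⟨φ, a, b, hf, hg⟩ :=
    exists_common_eigenvector_of_finrank_range_lie_le_one (f := f.dualMap) (g := g.dualMap)
      (by rwa [hdual, range_neg, finrank_range_dualMap_eq_finrank_range])
  exact ⟨φ, hf.2, a, b, hf.apply_eq_smul, hg.apply_eq_smul⟩

theorem exists_basis_apply_mem_flag [IsAlgClosed K] {f g : End K V}
    (h : finrank K (range ⁅f, g⁆) ≤ 1) {n : ℕ} (hn : finrank K V = n) :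
    ∃ b : Basis (Fin n) K V, ∀ j, f (b j) ∈ b.flag j.succ ∧ g (b j) ∈ b.flag j.succ := by
  induction n generalizing V with
  | zero => exact ⟨finBasisOfFinrankEq K V hn, fun j ↦ j.elim0⟩
  | succ n ih =>
  have : Nontrivial V := nontrivial_of_finrank_pos (R := K) (by omega)
  obtain ⟨φ, hφ, a, b, hfφ, hgφ⟩ := exists_dual_common_eigenvector h
  have hf := mapsTo_ker_of_comp_eq_smul hfφ
  have hg := mapsTo_ker_of_comp_eq_smul hgφ
  have hker : finrank K (ker φ) = n := by
    have := Dual.finrank_ker_add_one_of_ne_zero hφ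
    omega
  obtain ⟨bH, hbH⟩ := ih ((finrank_range_lie_restrict_le hf hg).trans h) hker
  obtain ⟨y, hy⟩ : ∃ y, φ y ≠ 0 := by simpa [DFunLike.ne_iff] using hφ
  have hli : ∀ c : K, ∀ x ∈ ker φ, c • y + x = 0 → c = 0 := fun c x hx hcx ↦ by
    simpa [mem_ker.mp hx, hy] using congrArg φ hcx
  have hsp : ∀ z, ∃ c : K, z + c • y ∈ ker φ := fun z ↦
    ⟨-(φ z / φ y), by
      rw [mem_ker, map_add, map_smul, smul_eq_mul, neg_mul, div_mul_cancel₀ _ hy, add_neg_cancel]⟩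
  exact ⟨bH.mkFinSnoc y hli hsp, fun j ↦
    ⟨bH.apply_mkFinSnoc_mem_flag y hli hsp hf (fun i ↦ (hbH i).1) j,
     bH.apply_mkFinSnoc_mem_flag y hli hsp hg (fun i ↦ (hbH i).2) j⟩⟩

end Module.End

/-- If `A, B` are `n × n` complex matrices whose commutator `AB − BA` has rank at most `1`,
then `A` and `B` are simultaneously triangularizable: there is an invertible matrix `P` such
that `P⁻¹AP` and `P⁻¹BP` are both upper triangular. -/
theorem simultaneously_triangularizable_of_rank_comm_le_one
    (n : ℕ) (A B : Matrix (Fin n) (Fin n) ℂ)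
    (h : Matrix.rank (A * B - B * A) ≤ 1) :
    ∃ P : (Matrix (Fin n) (Fin n) ℂ)ˣ,
      (((P⁻¹ : (Matrix (Fin n) (Fin n) ℂ)ˣ) : Matrix (Fin n) (Fin n) ℂ) * A * (P : Matrix (Fin n) (Fin n) ℂ)).BlockTriangular id ∧
      (((P⁻¹ : (Matrix (Fin n) (Fin n) ℂ)ˣ) : Matrix (Fin n) (Fin n) ℂ) * B * (P : Matrix (Fin n) (Fin n) ℂ)).BlockTriangular id := by
  rw [Matrix.rank_eq_finrank_range_lie_toLin'] at h
  obtain ⟨b, hb⟩ := End.exists_basis_apply_mem_flag h (finrank_fin_fun ℂ)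
  obtain ⟨P, hP⟩ := b.exists_units_inv_mul_mul_eq_toMatrix
  refine ⟨P, ?_⟩
  rw [hP, hP]
  exact ⟨b.toMatrix_blockTriangular_of_mem_flag fun j ↦ (hb j).1,
    b.toMatrix_blockTriangular_of_mem_flag fun j ↦ (hb j).2⟩
end

section
/- Let P : Mat_n(ℂ) × Mat_n(ℂ) → ℂ be a polynomial function of the matrix entries that is invariant under simultaneous conjugation, i.e. P(gXg^{−1}, gYg^{−1}) = P(X, Y) for all g ∈ GL_n(ℂ). If P(X, Y) = 0 for every commuting pair (XY = YX), then P(X, Y) = 0 for every pair with rank(XY − YX) ≤ 1. Equivalently, an invariant polynomial function on pairs of matrices whose commutator has rank at most 1 is completely determined by its values on pairs of commuting matrices. -/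
open MvPolynomial

/-- Evaluation of a polynomial in the entries of a pair of `n × n` matrices. -/
noncomputable def evalPair {n : ℕ}
    (P : MvPolynomial ((Fin n × Fin n) ⊕ (Fin n × Fin n)) ℂ)
    (X Y : Matrix (Fin n) (Fin n) ℂ) : ℂ :=
  MvPolynomial.eval (Sum.elim (fun q => X q.1 q.2) (fun q => Y q.1 q.2)) P

/-!
If `rank [X, Y] ≤ 1`, then `X` and `Y` have a common eigenvector: either an eigenspace of `X` is
`Y`-stable, or `range (X - μ)` is a smaller subspace, stable under both, that contains
`range [X, Y]`. Conjugating it to `e₀` makes the pair block upper triangular; conjugating further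
by `diag(t, 1, …, 1)` multiplies the first row off the diagonal by `t`, so by continuity an
invariant function takes the same value at `(X, Y)` and at the block-diagonal limit
`(a ⊕ X', b ⊕ Y')`. As `rank [X', Y'] ≤ rank [X, Y]`, induction on `n` ends at `n = 0`, where
all pairs commute. Polynomial functions are continuous, so this applies to `evalPair P`.
-/

open Module

namespace Module.End

variable {K V : Type*} [Field K] [AddCommGroup V] [Module K V]

lemma HasEigenvector.of_restrict_s16 {f : End K V} {U : Submodule K V} (hU : ∀ x ∈ U, f x ∈ U)
    {a : K} {v : U} (hv : HasEigenvector (f.restrict hU) a v) : f.HasEigenvector a v :=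
  ⟨eigenspace_restrict_le_eigenspace f hU a ⟨v, hv.1, rfl⟩, by simpa using hv.2⟩

lemma finrank_range_restrict_le [FiniteDimensional K V] (h : End K V) {U : Submodule K V}
    (hU : ∀ x ∈ U, h x ∈ U) :
    finrank K (LinearMap.range (h.restrict hU)) ≤ finrank K (LinearMap.range h) :=
  calc finrank K (LinearMap.range (h.restrict hU))
      = finrank K ((LinearMap.range (h.restrict hU)).map U.subtype) :=
        (Submodule.equivMapOfInjective _ U.injective_subtype _).finrank_eq
    _ ≤ finrank K (LinearMap.range h) := by
        rw [← LinearMap.range_comp]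
        exact Submodule.finrank_mono (LinearMap.range_comp_le_range U.subtype h)

lemma finrank_range_sub_smul_one_lt [FiniteDimensional K V] {f : End K V} {μ : K}
    (hμ : f.HasEigenvalue μ) : finrank K (LinearMap.range (f - μ • 1)) < finrank K V := by
  refine Submodule.finrank_lt fun htop => hasEigenvalue_iff.mp hμ ?_
  rw [eigenspace_def, LinearMap.ker_eq_bot, LinearMap.injective_iff_surjective]
  exact LinearMap.range_eq_top.mp htop

lemma mem_range_sub_smul_one_of_mem {f : End K V} {μ : K} {x : V}
    (hx : x ∈ LinearMap.range (f - μ • 1)) : f x ∈ LinearMap.range (f - μ • 1) := by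
  obtain ⟨u, rfl⟩ := hx
  exact ⟨f u, by simp⟩

lemma commutator_apply_of_mem_eigenspace {f g : End K V} {μ : K} {w : V}
    (hw : w ∈ f.eigenspace μ) : (f * g - g * f) w = (f - μ • 1) (g w) := by
  simp [mem_eigenspace_iff.mp hw]

lemma commutator_apply_ne_zero {f g : End K V} {μ : K} {w : V}
    (hw : w ∈ f.eigenspace μ) (hgw : g w ∉ f.eigenspace μ) : (f * g - g * f) w ≠ 0 := by
  rw [commutator_apply_of_mem_eigenspace hw]
  intro h0
  exact hgw (mem_eigenspace_iff.mpr (sub_eq_zero.mp (by simpa using h0)))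

lemma range_commutator_le_range_sub_smul_one [FiniteDimensional K V] {f g : End K V} {μ : K}
    {w : V} (hw : w ∈ f.eigenspace μ) (hgw : g w ∉ f.eigenspace μ)
    (h : finrank K (LinearMap.range (f * g - g * f)) ≤ 1) :
    LinearMap.range (f * g - g * f) ≤ LinearMap.range (f - μ • 1) := by
  have hne := commutator_apply_ne_zero hw hgw
  have hspan : LinearMap.range (f * g - g * f) = K ∙ (f * g - g * f) w :=
    (Submodule.eq_of_le_of_finrank_le
      ((Submodule.span_singleton_le_iff_mem _ _).mpr (LinearMap.mem_range_self _ w))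
      (by rwa [finrank_span_singleton hne])).symm
  rw [hspan, Submodule.span_singleton_le_iff_mem, commutator_apply_of_mem_eigenspace hw]
  exact LinearMap.mem_range_self _ _

lemma mem_range_sub_smul_one_of_range_commutator_le {f g : End K V} {μ : K}
    (h : LinearMap.range (f * g - g * f) ≤ LinearMap.range (f - μ • 1)) {x : V}
    (hx : x ∈ LinearMap.range (f - μ • 1)) : g x ∈ LinearMap.range (f - μ • 1) := by
  obtain ⟨u, rfl⟩ := hx
  have hgu : g ((f - μ • 1) u) = (f - μ • 1) (g u) - (f * g - g * f) u := by
    simp only [LinearMap.sub_apply, mul_apply, LinearMap.smul_apply, one_apply, map_sub, map_smul]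
    abel
  rw [hgu]
  exact Submodule.sub_mem _ (LinearMap.mem_range_self _ _) (h (LinearMap.mem_range_self _ _))

variable [IsAlgClosed K] [FiniteDimensional K V]

lemma exists_common_eigenvector_of_mapsTo_eigenspace {f g : End K V} {μ : K}
    (hμ : f.HasEigenvalue μ) (hg : ∀ x ∈ f.eigenspace μ, g x ∈ f.eigenspace μ) :
    ∃ v a b, f.HasEigenvector a v ∧ g.HasEigenvector b v := by
  have : Nontrivial (f.eigenspace μ) := Submodule.nontrivial_iff_ne_bot.mpr hμ
  obtain ⟨ν, hν⟩ := exists_eigenvalue (g.restrict hg)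
  obtain ⟨w, hw⟩ := hν.exists_hasEigenvector
  exact ⟨w, μ, ν, ⟨w.2, by simpa using hw.2⟩, hw.of_restrict_s16 hg⟩

theorem exists_common_eigenvector_of_finrank_range_commutator_le_one [Nontrivial V]
    (f g : End K V) (h : finrank K (LinearMap.range (f * g - g * f)) ≤ 1) :
    ∃ v a b, f.HasEigenvector a v ∧ g.HasEigenvector b v := by
  induction hd : finrank K V using Nat.strong_induction_on generalizing V with
  | _ d ih =>
  obtain ⟨μ, hμ⟩ := exists_eigenvalue f
  by_cases hg : ∀ x ∈ f.eigenspace μ, g x ∈ f.eigenspace μ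
  · exact exists_common_eigenvector_of_mapsTo_eigenspace hμ hg
  push Not at hg
  obtain ⟨w, hw, hgw⟩ := hg
  set U := LinearMap.range (f - μ • 1)
  have hcU := range_commutator_le_range_sub_smul_one hw hgw h
  have hfU : ∀ x ∈ U, f x ∈ U := fun _ => mem_range_sub_smul_one_of_mem
  have hgU : ∀ x ∈ U, g x ∈ U := fun _ => mem_range_sub_smul_one_of_range_commutator_le hcU
  have : Nontrivial U := nontrivial_of_ne ⟨_, hcU (LinearMap.mem_range_self _ w)⟩ 0
    (by simpa using commutator_apply_ne_zero hw hgw)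
  have hrank : finrank K (LinearMap.range
      (f.restrict hfU * g.restrict hgU - g.restrict hgU * f.restrict hfU)) ≤ 1 :=
    (finrank_range_restrict_le (f * g - g * f) fun x _ =>
      hcU (LinearMap.mem_range_self _ x)).trans h
  obtain ⟨v, a, b, hfv, hgv⟩ := ih _ (hd ▸ finrank_range_sub_smul_one_lt hμ) _ _ hrank rfl
  exact ⟨v, a, b, hfv.of_restrict_s16 hfU, hgv.of_restrict_s16 hgU⟩

end Module.End

namespace Matrix

section Field

variable {K : Type*} [Field K] {m : Type*} [Fintype m]

theorem exists_common_eigenvector_of_rank_commutator_le_one [IsAlgClosed K] [Nonempty m]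
    (X Y : Matrix m m K) (h : (X * Y - Y * X).rank ≤ 1) :
    ∃ v ≠ 0, ∃ a b : K, X *ᵥ v = a • v ∧ Y *ᵥ v = b • v := by
  have hcomm : (X * Y - Y * X).mulVecLin =
      X.mulVecLin * Y.mulVecLin - Y.mulVecLin * X.mulVecLin := by
    simp [mulVecLin_mul, Module.End.mul_eq_comp]
  obtain ⟨v, a, b, hXv, hYv⟩ :=
    Module.End.exists_common_eigenvector_of_finrank_range_commutator_le_one
      X.mulVecLin Y.mulVecLin (by rwa [rank, hcomm] at h)
  exact ⟨v, hXv.2, a, b, hXv.apply_eq_smul, hYv.apply_eq_smul⟩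

theorem exists_generalLinearGroup_mulVec_eq [DecidableEq m] {v w : m → K} (hv : v ≠ 0)
    (hw : w ≠ 0) :
    ∃ g : GL m K, (g : Matrix m m K) *ᵥ v = w := by
  obtain ⟨φ, hφ⟩ := Submodule.exists_linearEquiv_restrict_eq
    ((LinearEquiv.toSpanNonzeroSingleton K _ v hv).symm.trans
      (LinearEquiv.toSpanNonzeroSingleton K _ w hw))
  refine ⟨GeneralLinearGroup.toLin.symm
    ((LinearMap.GeneralLinearGroup.generalLinearEquiv K _).symm φ), ?_⟩
  have hφv := hφ ⟨v, Submodule.mem_span_singleton_self v⟩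
  rw [LinearEquiv.trans_apply, LinearEquiv.coord_self,
    LinearEquiv.toSpanNonzeroSingleton_one] at hφv
  rw [← mulVecLin_apply, ← GeneralLinearGroup.toLin_apply, MulEquiv.apply_symm_apply]
  exact hφv.symm

lemma rank_conj_commutator [DecidableEq m] (g : GL m K) (X Y : Matrix m m K) :
    ((g * X * g⁻¹ : Matrix m m K) * (g * Y * g⁻¹ : Matrix m m K) -
      (g * Y * g⁻¹ : Matrix m m K) * (g * X * g⁻¹ : Matrix m m K)).rank =
      (X * Y - Y * X).rank := by
  have hconj : ((g * X * g⁻¹ : Matrix m m K) * (g * Y * g⁻¹ : Matrix m m K) -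
      (g * Y * g⁻¹ : Matrix m m K) * (g * X * g⁻¹ : Matrix m m K)) =
      (g * (X * Y - Y * X) * g⁻¹ : Matrix m m K) := by
    simp only [Matrix.mul_sub, Matrix.sub_mul, Matrix.mul_assoc, Units.inv_mul_cancel_left]
  rw [hconj, rank_mul_eq_left_of_isUnit_det _ _ ((isUnit_iff_isUnit_det _).mp (g⁻¹).isUnit),
    rank_mul_eq_right_of_isUnit_det _ _ ((isUnit_iff_isUnit_det _).mp g.isUnit)]

end Field

section BlockDiagCons

variable {R : Type*} {n : ℕ}

def blockDiagCons [Zero R] (a : R) (M : Matrix (Fin n) (Fin n) R) :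
    Matrix (Fin (n + 1)) (Fin (n + 1)) R :=
  of (Fin.cons (Fin.cons a 0) fun i => Fin.cons 0 (M i))

section Zero

variable [Zero R] (a : R) (M : Matrix (Fin n) (Fin n) R)

@[simp] lemma blockDiagCons_zero_zero : blockDiagCons a M 0 0 = a := rfl
@[simp] lemma blockDiagCons_zero_succ (j : Fin n) : blockDiagCons a M 0 j.succ = 0 := rfl
@[simp] lemma blockDiagCons_succ_zero (i : Fin n) : blockDiagCons a M i.succ 0 = 0 := rfl
@[simp] lemma blockDiagCons_succ_succ (i j : Fin n) : blockDiagCons a M i.succ j.succ = M i j :=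
  rfl

lemma continuous_blockDiagCons [TopologicalSpace R] : Continuous (blockDiagCons (n := n) a) := by
  refine continuous_matrix fun i j => ?_
  cases i using Fin.cases <;> cases j using Fin.cases <;> simp <;> fun_prop

end Zero

lemma blockDiagCons_mul [Semiring R] (a b : R) (M N : Matrix (Fin n) (Fin n) R) :
    blockDiagCons a M * blockDiagCons b N = blockDiagCons (a * b) (M * N) := by
  ext i j
  cases i using Fin.cases <;> cases j using Fin.cases <;> simp [mul_apply, Fin.sum_univ_succ]

@[simp] lemma blockDiagCons_one [Semiring R] :
    blockDiagCons (1 : R) (1 : Matrix (Fin n) (Fin n) R) = 1 := by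
  ext i j
  cases i using Fin.cases <;> cases j using Fin.cases <;>
    simp [one_apply, (Fin.succ_ne_zero _).symm]

variable [CommRing R]

def blockDiagConsUnit (u : Rˣ) (g : GL (Fin n) R) : GL (Fin (n + 1)) R where
  val := blockDiagCons u g
  inv := blockDiagCons ↑u⁻¹ ↑g⁻¹
  val_inv := by rw [blockDiagCons_mul]; simp
  inv_val := by rw [blockDiagCons_mul]; simp

@[simp] lemma coe_blockDiagConsUnit (u : Rˣ) (g : GL (Fin n) R) :
    (blockDiagConsUnit u g : Matrix (Fin (n + 1)) (Fin (n + 1)) R) =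
      blockDiagCons (u : R) (g : Matrix (Fin n) (Fin n) R) :=
  rfl

@[simp] lemma coe_blockDiagConsUnit_inv (u : Rˣ) (g : GL (Fin n) R) :
    ((blockDiagConsUnit u g)⁻¹ : GL (Fin (n + 1)) R) =
      blockDiagCons (↑u⁻¹ : R) (↑g⁻¹ : Matrix (Fin n) (Fin n) R) :=
  rfl

lemma conj_blockDiagConsUnit_one (g : GL (Fin n) R) (a : R) (M : Matrix (Fin n) (Fin n) R) :
    (blockDiagConsUnit 1 g : Matrix (Fin (n + 1)) (Fin (n + 1)) R) * blockDiagCons a M *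
      ((blockDiagConsUnit 1 g)⁻¹ : GL (Fin (n + 1)) R) =
      blockDiagCons a ((g : Matrix (Fin n) (Fin n) R) * M *
        ((g⁻¹ : GL (Fin n) R) : Matrix (Fin n) (Fin n) R)) := by
  rw [coe_blockDiagConsUnit, coe_blockDiagConsUnit_inv, blockDiagCons_mul, blockDiagCons_mul]
  simp

end BlockDiagCons

section FirstColumn

variable {n : ℕ}

lemma submatrix_succ_succ_mul {R : Type*} [Semiring R] {X : Matrix (Fin (n + 1)) (Fin (n + 1)) R}
    (hX : ∀ i : Fin n, X i.succ 0 = 0) (Y : Matrix (Fin (n + 1)) (Fin (n + 1)) R) :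
    (X * Y).submatrix Fin.succ Fin.succ =
      X.submatrix Fin.succ Fin.succ * Y.submatrix Fin.succ Fin.succ := by
  ext i j
  simp [mul_apply, Fin.sum_univ_succ, hX i]

lemma rank_commutator_submatrix_succ_succ_le {R : Type*} [CommRing R] [StrongRankCondition R]
    {X Y : Matrix (Fin (n + 1)) (Fin (n + 1)) R} (hX : ∀ i : Fin n, X i.succ 0 = 0)
    (hY : ∀ i : Fin n, Y i.succ 0 = 0) :
    (X.submatrix Fin.succ Fin.succ * Y.submatrix Fin.succ Fin.succ -
      Y.submatrix Fin.succ Fin.succ * X.submatrix Fin.succ Fin.succ).rank ≤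
      (X * Y - Y * X).rank := by
  rw [← submatrix_succ_succ_mul hX, ← submatrix_succ_succ_mul hY]
  exact rank_submatrix_le (X * Y - Y * X) Fin.succ Fin.succ

variable {K : Type*} [Field K]

lemma conj_apply_succ_zero_eq_zero {M : Matrix (Fin (n + 1)) (Fin (n + 1)) K}
    {g : GL (Fin (n + 1)) K} {v : Fin (n + 1) → K} {a : K}
    (hg : (g : Matrix (Fin (n + 1)) (Fin (n + 1)) K) *ᵥ v = Pi.single 0 1)
    (hM : M *ᵥ v = a • v)
    (i : Fin n) :
    ((g : Matrix (Fin (n + 1)) (Fin (n + 1)) K) * M *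
      ((g⁻¹ : GL (Fin (n + 1)) K) : Matrix (Fin (n + 1)) (Fin (n + 1)) K)) i.succ 0 = 0 := by
  have hv : ((g⁻¹ : GL (Fin (n + 1)) K) : Matrix (Fin (n + 1)) (Fin (n + 1)) K) *ᵥ
      Pi.single 0 1 = v := by
    rw [← hg, mulVec_mulVec, Units.inv_mul, one_mulVec]
  calc _ = (((g : Matrix (Fin (n + 1)) (Fin (n + 1)) K) * M *
        ((g⁻¹ : GL (Fin (n + 1)) K) : Matrix (Fin (n + 1)) (Fin (n + 1)) K)) *ᵥ
          Pi.single 0 1) i.succ := by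
        rw [mulVec_single_one]; rfl
    _ = a * (Pi.single 0 1 : Fin (n + 1) → K) i.succ := by
        rw [← mulVec_mulVec, hv, ← mulVec_mulVec, hM, mulVec_smul, hg]; rfl
    _ = 0 := by simp

theorem exists_conj_apply_succ_zero_eq_zero [IsAlgClosed K]
    (X Y : Matrix (Fin (n + 1)) (Fin (n + 1)) K) (h : (X * Y - Y * X).rank ≤ 1) :
    ∃ g : GL (Fin (n + 1)) K, ∀ i : Fin n,
      ((g : Matrix (Fin (n + 1)) (Fin (n + 1)) K) * X *
        ((g⁻¹ : GL (Fin (n + 1)) K) : Matrix (Fin (n + 1)) (Fin (n + 1)) K)) i.succ 0 = 0 ∧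
      ((g : Matrix (Fin (n + 1)) (Fin (n + 1)) K) * Y *
        ((g⁻¹ : GL (Fin (n + 1)) K) : Matrix (Fin (n + 1)) (Fin (n + 1)) K)) i.succ 0 = 0 := by
  obtain ⟨v, hv, a, b, hXv, hYv⟩ := exists_common_eigenvector_of_rank_commutator_le_one X Y h
  obtain ⟨g, hg⟩ :=
    exists_generalLinearGroup_mulVec_eq hv (Pi.single_ne_zero_iff.mpr one_ne_zero)
  exact ⟨g, fun i =>
    ⟨conj_apply_succ_zero_eq_zero hg hXv i, conj_apply_succ_zero_eq_zero hg hYv i⟩⟩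

lemma blockDiagCons_mul_mul_blockDiagCons_inv {M : Matrix (Fin (n + 1)) (Fin (n + 1)) K}
    (hM : ∀ i : Fin n, M i.succ 0 = 0) {t : K} (ht : t ≠ 0) :
    let M₀ := blockDiagCons (M 0 0) (M.submatrix Fin.succ Fin.succ)
    blockDiagCons t 1 * M * blockDiagCons t⁻¹ 1 = M₀ + t • (M - M₀) := by
  ext i j
  cases i using Fin.cases <;> cases j using Fin.cases <;>
    simp [mul_apply, Fin.sum_univ_succ, hM, one_apply]
  field_simp

end FirstColumn

section Degeneration

variable {K : Type*} [NontriviallyNormedField K] {T : Type*} [TopologicalSpace T] [T2Space T]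
  {n : ℕ}

theorem apply_eq_apply_blockDiagCons
    (F : Matrix (Fin (n + 1)) (Fin (n + 1)) K → Matrix (Fin (n + 1)) (Fin (n + 1)) K → T)
    (hF : Continuous (Function.uncurry F))
    (hinv : ∀ (g : GL (Fin (n + 1)) K) (X Y : Matrix (Fin (n + 1)) (Fin (n + 1)) K),
      F ((g : Matrix (Fin (n + 1)) (Fin (n + 1)) K) * X *
          ((g⁻¹ : GL (Fin (n + 1)) K) : Matrix (Fin (n + 1)) (Fin (n + 1)) K))
        ((g : Matrix (Fin (n + 1)) (Fin (n + 1)) K) * Y *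
          ((g⁻¹ : GL (Fin (n + 1)) K) : Matrix (Fin (n + 1)) (Fin (n + 1)) K)) = F X Y)
    {X Y : Matrix (Fin (n + 1)) (Fin (n + 1)) K}
    (hX : ∀ i : Fin n, X i.succ 0 = 0) (hY : ∀ i : Fin n, Y i.succ 0 = 0) :
    F X Y = F (blockDiagCons (X 0 0) (X.submatrix Fin.succ Fin.succ))
      (blockDiagCons (Y 0 0) (Y.submatrix Fin.succ Fin.succ)) := by
  set X₀ := blockDiagCons (X 0 0) (X.submatrix Fin.succ Fin.succ)
  set Y₀ := blockDiagCons (Y 0 0) (Y.submatrix Fin.succ Fin.succ)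
  let φ : K → T := fun t => F (X₀ + t • (X - X₀)) (Y₀ + t • (Y - Y₀))
  have hφ : Continuous φ :=
    hF.comp (f := fun t : K => (X₀ + t • (X - X₀), Y₀ + t • (Y - Y₀))) (by fun_prop)
  -- for `t ≠ 0`, `φ t` is the value of `F` at the conjugate of `(X, Y)` by `diag(t, 1, …, 1)`
  have hconst : φ = fun _ => F X Y := by
    refine Continuous.ext_on (dense_compl_singleton 0) hφ continuous_const
      fun t (ht : t ≠ 0) => ?_
    have := hinv (blockDiagConsUnit (Units.mk0 t ht) 1) X Y
    simp only [coe_blockDiagConsUnit, coe_blockDiagConsUnit_inv, Units.val_inv_eq_inv_val,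
      Units.val_mk0, inv_one, Units.val_one] at this
    rwa [blockDiagCons_mul_mul_blockDiagCons_inv hX ht,
      blockDiagCons_mul_mul_blockDiagCons_inv hY ht] at this
  simpa [φ] using (congrFun hconst 0).symm

theorem apply_eq_zero_of_rank_commutator_le_one [IsAlgClosed K] [Zero T]
    (F : Matrix (Fin n) (Fin n) K → Matrix (Fin n) (Fin n) K → T)
    (hF : Continuous (Function.uncurry F))
    (hinv : ∀ (g : GL (Fin n) K) (X Y : Matrix (Fin n) (Fin n) K),
      F ((g : Matrix (Fin n) (Fin n) K) * X * ((g⁻¹ : GL (Fin n) K) : Matrix (Fin n) (Fin n) K))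
        ((g : Matrix (Fin n) (Fin n) K) * Y * ((g⁻¹ : GL (Fin n) K) : Matrix (Fin n) (Fin n) K))
        = F X Y)
    (hcomm : ∀ X Y : Matrix (Fin n) (Fin n) K, X * Y = Y * X → F X Y = 0)
    {X Y : Matrix (Fin n) (Fin n) K} (h : (X * Y - Y * X).rank ≤ 1) : F X Y = 0 := by
  induction n with
  | zero => exact hcomm X Y (Subsingleton.elim _ _)
  | succ n ih =>
  obtain ⟨g, hg⟩ := exists_conj_apply_succ_zero_eq_zero X Y h
  set X₁ := (g : Matrix (Fin (n + 1)) (Fin (n + 1)) K) * X *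
    ((g⁻¹ : GL (Fin (n + 1)) K) : Matrix (Fin (n + 1)) (Fin (n + 1)) K)
  set Y₁ := (g : Matrix (Fin (n + 1)) (Fin (n + 1)) K) * Y *
    ((g⁻¹ : GL (Fin (n + 1)) K) : Matrix (Fin (n + 1)) (Fin (n + 1)) K)
  rw [← hinv g X Y, apply_eq_apply_blockDiagCons F hF hinv (fun i => (hg i).1) fun i => (hg i).2]
  refine ih (fun X' Y' => F (blockDiagCons (X₁ 0 0) X') (blockDiagCons (Y₁ 0 0) Y'))
    (hF.comp ((continuous_blockDiagCons _).prodMap (continuous_blockDiagCons _)))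
    (fun g' X' Y' => ?_) (fun X' Y' hXY => hcomm _ _ ?_) ?_
  · simp only [← conj_blockDiagConsUnit_one, hinv]
  · rw [blockDiagCons_mul, blockDiagCons_mul, mul_comm (X₁ 0 0), hXY]
  · exact (rank_commutator_submatrix_succ_succ_le (fun i => (hg i).1) fun i => (hg i).2).trans
      ((rank_conj_commutator g X Y).trans_le h)

end Degeneration

end Matrix

lemma continuous_evalPair {n : ℕ} (P : MvPolynomial ((Fin n × Fin n) ⊕ (Fin n × Fin n)) ℂ) :
    Continuous (Function.uncurry (evalPair P)) := by
  refine (MvPolynomial.continuous_eval P).comp (continuous_pi fun s => ?_)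
  cases s <;> simp only [Sum.elim_inl, Sum.elim_inr] <;> fun_prop

/-- A polynomial function `P` on pairs of `n × n` complex matrices which is invariant under
simultaneous conjugation and vanishes on all commuting pairs also vanishes on every pair
whose commutator has rank at most `1`.  Equivalently, an invariant polynomial function on
pairs with `rank [X,Y] ≤ 1` is determined by its values on commuting pairs. -/
theorem invariant_vanishing_on_rank_le_one_commutator (n : ℕ)
    (P : MvPolynomial ((Fin n × Fin n) ⊕ (Fin n × Fin n)) ℂ)
    (hinv : ∀ (g : Matrix.GeneralLinearGroup (Fin n) ℂ) (X Y : Matrix (Fin n) (Fin n) ℂ),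
      evalPair P ((g : Matrix (Fin n) (Fin n) ℂ) * X * ((g⁻¹ : Matrix.GeneralLinearGroup (Fin n) ℂ) : Matrix (Fin n) (Fin n) ℂ))
        ((g : Matrix (Fin n) (Fin n) ℂ) * Y * ((g⁻¹ : Matrix.GeneralLinearGroup (Fin n) ℂ) : Matrix (Fin n) (Fin n) ℂ))
        = evalPair P X Y)
    (hcomm : ∀ X Y : Matrix (Fin n) (Fin n) ℂ, X * Y = Y * X → evalPair P X Y = 0) :
    ∀ X Y : Matrix (Fin n) (Fin n) ℂ,
      Matrix.rank (X * Y - Y * X) ≤ 1 → evalPair P X Y = 0 :=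
  fun _ _ h => Matrix.apply_eq_zero_of_rank_commutator_le_one _ (continuous_evalPair P) hinv hcomm h
end

section
/- Let n ≥ 1 and equip ℂ[x_1,…,x_n,p_1,…,p_n] with the canonical Poisson bracket {f, g} = Σ_{i=1}^n (∂f/∂x_i · ∂g/∂p_i − ∂f/∂p_i · ∂g/∂x_i). Then the invariant ring ℂ[x_1,…,x_n,p_1,…,p_n]^{S_n} (for the diagonal permutation action of S_n on the x- and p-variables) is generated as a Poisson algebra by the power sums f_m = Σ_i x_i^m and f_m^* = Σ_i p_i^m (m ≥ 1); that is, the smallest ℂ-subalgebra containing all f_m and f_m^* and closed under the bracket {·,·} equals ℂ[x_1,…,x_n,p_1,…,p_n]^{S_n}. -/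
open MvPolynomial

/-- The canonical Poisson bracket on `ℂ[x₁,…,xₙ,p₁,…,pₙ]`, where the `x`-variables are
indexed by `Sum.inl` and the `p`-variables by `Sum.inr`:
`{f, g} = Σᵢ (∂f/∂xᵢ ∂g/∂pᵢ − ∂f/∂pᵢ ∂g/∂xᵢ)`. -/
noncomputable def poissonBracket {n : ℕ}
    (f g : MvPolynomial (Fin n ⊕ Fin n) ℂ) : MvPolynomial (Fin n ⊕ Fin n) ℂ :=
  ∑ i : Fin n,
    (MvPolynomial.pderiv (Sum.inl i) f * MvPolynomial.pderiv (Sum.inr i) g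
      - MvPolynomial.pderiv (Sum.inr i) f * MvPolynomial.pderiv (Sum.inl i) g)

namespace PoissonPowerSums

open Finset

/-- The symmetrized monomial `Σ_σ Π_i x_{σ i}^{a i} p_{σ i}^{b i}`. -/
noncomputable def Ssum (n : ℕ) (a b : Fin n → ℕ) : MvPolynomial (Fin n ⊕ Fin n) ℂ :=
  ∑ σ : Equiv.Perm (Fin n), ∏ i : Fin n,
    X (Sum.inl (σ i)) ^ a i * X (Sum.inr (σ i)) ^ b i

lemma Ssum_comp {n : ℕ} (a b : Fin n → ℕ) (τ : Equiv.Perm (Fin n)) :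
    Ssum n (a ∘ τ) (b ∘ τ) = Ssum n a b := by
  unfold Ssum
  refine Fintype.sum_bijective (fun σ => σ * τ⁻¹)
    (Group.mulRight_bijective _) _ _ (fun σ => ?_)
  rw [← Equiv.prod_comp τ
    (fun i => X (Sum.inl ((σ * τ⁻¹) i)) ^ a i * X (Sum.inr ((σ * τ⁻¹) i)) ^ b i)]
  simp [Equiv.Perm.mul_apply]

lemma mul_Ssum {n : ℕ} (a b : Fin n → ℕ) (c d : ℕ) :
    (∑ v : Fin n, X (Sum.inl v) ^ c * X (Sum.inr v) ^ d : MvPolynomial (Fin n ⊕ Fin n) ℂ)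
        * Ssum n a b
      = ∑ t : Fin n, Ssum n (Function.update a t (a t + c)) (Function.update b t (b t + d)) := by
  unfold Ssum
  rw [Finset.mul_sum]
  rw [show (∑ t : Fin n, ∑ σ : Equiv.Perm (Fin n), ∏ i : Fin n,
      X (Sum.inl (σ i)) ^ (Function.update a t (a t + c) i)
        * X (Sum.inr (σ i)) ^ (Function.update b t (b t + d) i))
    = ∑ σ : Equiv.Perm (Fin n), ∑ t : Fin n, ∏ i : Fin n,
      X (Sum.inl (σ i)) ^ (Function.update a t (a t + c) i)
        * X (Sum.inr (σ i)) ^ (Function.update b t (b t + d) i) from Finset.sum_comm]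
  refine Finset.sum_congr rfl fun σ _ => ?_
  rw [Finset.sum_mul]
  rw [← Equiv.sum_comp σ (fun v => (X (Sum.inl v) ^ c * X (Sum.inr v) ^ d
      : MvPolynomial (Fin n ⊕ Fin n) ℂ)
      * ∏ i : Fin n, X (Sum.inl (σ i)) ^ a i * X (Sum.inr (σ i)) ^ b i)]
  refine Finset.sum_congr rfl fun t _ => ?_
  rw [← Finset.mul_prod_erase univ _ (Finset.mem_univ t),
      ← Finset.mul_prod_erase univ
        (fun i => X (Sum.inl (σ i)) ^ (Function.update a t (a t + c) i)
          * X (Sum.inr (σ i)) ^ (Function.update b t (b t + d) i)) (Finset.mem_univ t)]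
  have hprod : (∏ i ∈ univ.erase t,
        (X (Sum.inl (σ i)) ^ (Function.update a t (a t + c) i)
          * X (Sum.inr (σ i)) ^ (Function.update b t (b t + d) i)
          : MvPolynomial (Fin n ⊕ Fin n) ℂ))
      = ∏ i ∈ univ.erase t, (X (Sum.inl (σ i)) ^ a i * X (Sum.inr (σ i)) ^ b i) :=
    Finset.prod_congr rfl fun i hi => by
      rw [Function.update_of_ne (Finset.ne_of_mem_erase hi),
          Function.update_of_ne (Finset.ne_of_mem_erase hi)]
  rw [hprod, Function.update_self, Function.update_self, pow_add, pow_add]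
  ring

lemma Ssum_mem {n : ℕ} (A : Subalgebra ℂ (MvPolynomial (Fin n ⊕ Fin n) ℂ))
    (hP : ∀ c d : ℕ, (∑ v : Fin n, X (Sum.inl v) ^ c * X (Sum.inr v) ^ d) ∈ A)
    (a b : Fin n → ℕ) : Ssum n a b ∈ A := by
  generalize hk : (univ.filter fun i => a i ≠ 0 ∨ b i ≠ 0).card = k
  induction k using Nat.strong_induction_on generalizing a b with
  | _ k IH =>
  by_cases h0 : ∀ i, a i = 0 ∧ b i = 0
  · have : Ssum n a b = ∑ _σ : Equiv.Perm (Fin n), (1 : MvPolynomial (Fin n ⊕ Fin n) ℂ) :=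
      Finset.sum_congr rfl fun σ _ =>
        Finset.prod_eq_one fun i _ => by rw [(h0 i).1, (h0 i).2]; simp
    rw [this]
    exact A.sum_mem fun _ _ => A.one_mem
  · push_neg at h0
    obtain ⟨j, hj⟩ := h0
    have hj' : a j ≠ 0 ∨ b j ≠ 0 := by tauto
    set a0 := Function.update a j 0 with ha0
    set b0 := Function.update b j 0 with hb0
    set s : Finset (Fin n) := univ.filter fun i => a0 i ≠ 0 ∨ b0 i ≠ 0 with hs
    have hjs : j ∉ s := by simp [hs, ha0, hb0]
    have hjk : j ∈ univ.filter fun i => a i ≠ 0 ∨ b i ≠ 0 := by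
      simp only [Finset.mem_filter, Finset.mem_univ, true_and]; exact hj'
    have hsupp : s = (univ.filter fun i => a i ≠ 0 ∨ b i ≠ 0).erase j := by
      ext i
      rcases eq_or_ne i j with rfl | hij
      · simp only [Finset.mem_erase, ne_eq, not_true_eq_false, false_and, iff_false]
        exact hjs
      · simp [hs, ha0, hb0, Function.update_of_ne hij, hij]
    have hk1 : 1 ≤ k := by
      rw [← hk]; exact Finset.card_pos.mpr ⟨j, hjk⟩
    have hscard : s.card = k - 1 := by rw [hsupp, Finset.card_erase_of_mem hjk, hk]
    have h0mem : Ssum n a0 b0 ∈ A := IH (k - 1) (by omega) a0 b0 hscard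
    set F : Fin n → MvPolynomial (Fin n ⊕ Fin n) ℂ := fun t =>
      Ssum n (Function.update a0 t (a0 t + a j)) (Function.update b0 t (b0 t + b j)) with hF
    have key : (∑ v : Fin n, X (Sum.inl v) ^ (a j) * X (Sum.inr v) ^ (b j)
          : MvPolynomial (Fin n ⊕ Fin n) ℂ) * Ssum n a0 b0 = ∑ t : Fin n, F t :=
      mul_Ssum a0 b0 (a j) (b j)
    have houts : ∀ t, t ∉ s → F t = Ssum n a b := by
      intro t hts
      have hta0 : a0 t = 0 := by
        by_contra h; exact hts (by simp [hs, h])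
      have htb0 : b0 t = 0 := by
        by_contra h; exact hts (by simp [hs, h])
      have h1 : Function.update a0 t (a0 t + a j) = a ∘ (Equiv.swap j t) := by
        funext i
        rcases eq_or_ne i t with rfl | hit
        · simp [hta0, Equiv.swap_apply_right]
        · rcases eq_or_ne i j with rfl | hijj
          · have hat : a t = 0 := by
              rwa [ha0, Function.update_of_ne hit.symm] at hta0
            simp [Function.update_of_ne hit, ha0, Equiv.swap_apply_left, hat]
          · simp [Function.update_of_ne hit, ha0, Function.update_of_ne hijj,
              Equiv.swap_apply_of_ne_of_ne hijj hit]
      have h2 : Function.update b0 t (b0 t + b j) = b ∘ (Equiv.swap j t) := by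
        funext i
        rcases eq_or_ne i t with rfl | hit
        · simp [htb0, Equiv.swap_apply_right]
        · rcases eq_or_ne i j with rfl | hijj
          · have hbt : b t = 0 := by
              rwa [hb0, Function.update_of_ne hit.symm] at htb0
            simp [Function.update_of_ne hit, hb0, Equiv.swap_apply_left, hbt]
          · simp [Function.update_of_ne hit, hb0, Function.update_of_ne hijj,
              Equiv.swap_apply_of_ne_of_ne hijj hit]
      rw [hF]
      simp only []
      rw [h1, h2, Ssum_comp]
    have hins : ∀ t ∈ s, F t ∈ A := by
      intro t hts
      refine IH (k - 1) (by omega) _ _ ?_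
      have hset : (univ.filter fun i => Function.update a0 t (a0 t + a j) i ≠ 0 ∨
          Function.update b0 t (b0 t + b j) i ≠ 0) = s := by
        ext i
        rcases eq_or_ne i t with rfl | hit
        · have hts' : a0 i ≠ 0 ∨ b0 i ≠ 0 := by
            simpa [hs] using hts
          simp only [Finset.mem_filter, Finset.mem_univ, true_and, Function.update_self, hs]
          omega
        · simp [Function.update_of_ne hit, hs]
      rw [hset, hscard]
    have hsplit : (∑ t ∈ s, F t) + ∑ t ∈ sᶜ, F t = ∑ t : Fin n, F t :=
      Finset.sum_add_sum_compl s F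
    have hcard : sᶜ.card ≠ 0 := Finset.card_ne_zero_of_mem (Finset.mem_compl.mpr hjs)
    have heq : (sᶜ.card : ℂ) • Ssum n a b
        = (∑ v : Fin n, X (Sum.inl v) ^ (a j) * X (Sum.inr v) ^ (b j)
            : MvPolynomial (Fin n ⊕ Fin n) ℂ) * Ssum n a0 b0 - ∑ t ∈ s, F t := by
      rw [key, ← hsplit,
        Finset.sum_congr rfl (fun t ht => houts t (Finset.mem_compl.mp ht)),
        Finset.sum_const, Nat.cast_smul_eq_nsmul]
      abel
    have hfin : Ssum n a b = ((sᶜ.card : ℂ))⁻¹ • ((sᶜ.card : ℂ) • Ssum n a b) := by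
      rw [smul_smul, inv_mul_cancel₀ (by exact_mod_cast hcard), one_smul]
    rw [hfin, heq]
    exact A.smul_mem (A.sub_mem (A.mul_mem (hP (a j) (b j)) h0mem)
      (A.sum_mem fun t ht => hins t ht)) _

lemma sum_rename_monomial {n : ℕ} (d : (Fin n ⊕ Fin n) →₀ ℕ) :
    ∑ σ : Equiv.Perm (Fin n), rename (Equiv.sumCongr σ σ) (monomial d (1 : ℂ))
      = Ssum n (fun i => d (Sum.inl i)) (fun i => d (Sum.inr i)) := by
  refine Finset.sum_congr rfl fun σ _ => ?_
  rw [monomial_eq, map_one, one_mul,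
    Finsupp.prod_fintype _ _ (fun v => pow_zero _), map_prod]
  simp only [map_pow, rename_X, Equiv.sumCongr_apply, Sum.map_inl, Sum.map_inr]
  rw [Fintype.prod_sum_type]
  simp only [Sum.map_inl, Sum.map_inr]
  rw [← Finset.prod_mul_distrib]

lemma bracket_power_sums {n : ℕ} (c d : ℕ) :
    poissonBracket (∑ i : Fin n, X (Sum.inl i) ^ (c + 1))
        (∑ i : Fin n, X (Sum.inr i) ^ (d + 1))
      = (((c : ℂ) + 1) * ((d : ℂ) + 1)) •
          ∑ v : Fin n, X (Sum.inl v) ^ c * X (Sum.inr v) ^ d := by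
  unfold poissonBracket
  rw [Finset.smul_sum]
  refine Finset.sum_congr rfl fun i _ => ?_
  rw [map_sum, map_sum, map_sum, map_sum]
  simp only [pderiv_pow, pderiv_X, Pi.single_apply]
  simp only [Sum.inl.injEq, Sum.inr.injEq]
  simp [Finset.mul_sum, Finset.sum_ite_eq', mul_comm, mul_assoc, mul_left_comm]
  rw [smul_eq_C_mul]
  simp only [map_add, map_mul, map_one, map_natCast]
  ring

lemma rename_bracket {n : ℕ} (σ : Equiv.Perm (Fin n))
    (f g : MvPolynomial (Fin n ⊕ Fin n) ℂ) :
    rename (Equiv.sumCongr σ σ) (poissonBracket f g)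
      = poissonBracket (rename (Equiv.sumCongr σ σ) f) (rename (Equiv.sumCongr σ σ) g) := by
  unfold poissonBracket
  rw [map_sum,
    ← Equiv.sum_comp σ (fun i =>
      pderiv (Sum.inl i) (rename (Equiv.sumCongr σ σ) f)
        * pderiv (Sum.inr i) (rename (Equiv.sumCongr σ σ) g)
      - pderiv (Sum.inr i) (rename (Equiv.sumCongr σ σ) f)
        * pderiv (Sum.inl i) (rename (Equiv.sumCongr σ σ) g))]
  refine Finset.sum_congr rfl fun i _ => ?_
  have hinj : Function.Injective (Equiv.sumCongr σ σ) := (Equiv.sumCongr σ σ).injective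
  have hl : ∀ p : MvPolynomial (Fin n ⊕ Fin n) ℂ,
      pderiv (Sum.inl (σ i)) (rename (Equiv.sumCongr σ σ) p)
        = rename (Equiv.sumCongr σ σ) (pderiv (Sum.inl i) p) := fun p => by
    have := pderiv_rename hinj (Sum.inl i) p
    simpa using this
  have hr : ∀ p : MvPolynomial (Fin n ⊕ Fin n) ℂ,
      pderiv (Sum.inr (σ i)) (rename (Equiv.sumCongr σ σ) p)
        = rename (Equiv.sumCongr σ σ) (pderiv (Sum.inr i) p) := fun p => by
    have := pderiv_rename hinj (Sum.inr i) p
    simpa using this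
  rw [map_sub, map_mul, map_mul, hl f, hr g, hr f, hl g]

/-- The invariant subalgebra. -/
noncomputable def invariantAlg (n : ℕ) : Subalgebra ℂ (MvPolynomial (Fin n ⊕ Fin n) ℂ) where
  carrier := {q | ∀ σ : Equiv.Perm (Fin n), rename (Equiv.sumCongr σ σ) q = q}
  mul_mem' := fun hf hg σ => by rw [map_mul, hf σ, hg σ]
  add_mem' := fun hf hg σ => by rw [map_add, hf σ, hg σ]
  algebraMap_mem' := fun c σ => by simp [algebraMap_eq]

end PoissonPowerSums

open PoissonPowerSums in
/-- The invariant ring `ℂ[x₁,…,xₙ,p₁,…,pₙ]^{Sₙ}` (diagonal permutation action) is generated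
as a Poisson algebra by the power sums `f_m = Σᵢ xᵢ^m` and `f_m^* = Σᵢ pᵢ^m` (`m ≥ 1`):
a polynomial is invariant if and only if it lies in every `ℂ`-subalgebra which contains all
`f_m, f_m^*` and is closed under the canonical Poisson bracket; i.e. the smallest such
subalgebra is exactly the invariant ring. -/
theorem invariants_poisson_generated_by_power_sums (n : ℕ)
    (p : MvPolynomial (Fin n ⊕ Fin n) ℂ) :
    (∀ σ : Equiv.Perm (Fin n),
        MvPolynomial.rename (Equiv.sumCongr σ σ) p = p) ↔
      ∀ A : Subalgebra ℂ (MvPolynomial (Fin n ⊕ Fin n) ℂ),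
        (∀ m : ℕ, 1 ≤ m → (∑ i : Fin n, MvPolynomial.X (Sum.inl i) ^ m) ∈ A) →
        (∀ m : ℕ, 1 ≤ m → (∑ i : Fin n, MvPolynomial.X (Sum.inr i) ^ m) ∈ A) →
        (∀ f g, f ∈ A → g ∈ A → poissonBracket f g ∈ A) →
        p ∈ A := by
  constructor
  · intro hinv A hx hp hbr
    have hP : ∀ c d : ℕ, (∑ v : Fin n, X (Sum.inl v) ^ c * X (Sum.inr v) ^ d) ∈ A := by
      intro c d
      have hmem := hbr _ _ (hx (c + 1) (by omega)) (hp (d + 1) (by omega))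
      rw [bracket_power_sums c d] at hmem
      have hne : ((c : ℂ) + 1) * ((d : ℂ) + 1) ≠ 0 :=
        mul_ne_zero (Nat.cast_add_one_ne_zero c) (Nat.cast_add_one_ne_zero d)
      have h2 := A.smul_mem hmem ((((c : ℂ) + 1) * ((d : ℂ) + 1))⁻¹)
      rwa [smul_smul, inv_mul_cancel₀ hne, one_smul] at h2
    have hS : ∀ a b : Fin n → ℕ, Ssum n a b ∈ A := Ssum_mem A hP
    have h1 : ∑ σ : Equiv.Perm (Fin n), rename (Equiv.sumCongr σ σ) p
        = (n.factorial : ℂ) • p := by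
      rw [Finset.sum_congr rfl fun σ _ => hinv σ, Finset.sum_const, Finset.card_univ,
        Fintype.card_perm, Fintype.card_fin, Nat.cast_smul_eq_nsmul]
    have h2 : ∑ σ : Equiv.Perm (Fin n), rename (Equiv.sumCongr σ σ) p
        = ∑ d ∈ p.support, (coeff d p) •
            Ssum n (fun i => d (Sum.inl i)) (fun i => d (Sum.inr i)) := by
      calc ∑ σ : Equiv.Perm (Fin n), rename (Equiv.sumCongr σ σ) p
          = ∑ σ : Equiv.Perm (Fin n), ∑ d ∈ p.support,
              (coeff d p) • rename (Equiv.sumCongr σ σ) (monomial d (1 : ℂ)) := by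
            refine Finset.sum_congr rfl fun σ _ => ?_
            conv_lhs => rw [p.as_sum]
            rw [map_sum]
            refine Finset.sum_congr rfl fun d _ => ?_
            rw [← map_smul, smul_monomial, smul_eq_mul, mul_one]
        _ = ∑ d ∈ p.support, ∑ σ : Equiv.Perm (Fin n),
              (coeff d p) • rename (Equiv.sumCongr σ σ) (monomial d (1 : ℂ)) :=
            Finset.sum_comm
        _ = _ := by
            refine Finset.sum_congr rfl fun d _ => ?_
            rw [← Finset.smul_sum, sum_rename_monomial]
    have hfac : (n.factorial : ℂ) ≠ 0 := Nat.cast_ne_zero.mpr n.factorial_ne_zero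
    have hp' : p = (n.factorial : ℂ)⁻¹ • ∑ d ∈ p.support, (coeff d p) •
        Ssum n (fun i => d (Sum.inl i)) (fun i => d (Sum.inr i)) := by
      rw [← h2, h1, smul_smul, inv_mul_cancel₀ hfac, one_smul]
    rw [hp']
    exact A.smul_mem (A.sum_mem fun d _ => A.smul_mem (hS _ _) _) _
  · intro h
    refine h (invariantAlg n) ?_ ?_ ?_
    · intro m _ σ
      rw [map_sum]
      simp only [map_pow, rename_X, Equiv.sumCongr_apply, Sum.map_inl]
      exact Equiv.sum_comp σ (fun i => X (Sum.inl i) ^ m)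
    · intro m _ σ
      rw [map_sum]
      simp only [map_pow, rename_X, Equiv.sumCongr_apply, Sum.map_inr]
      exact Equiv.sum_comp σ (fun i => X (Sum.inr i) ^ m)
    · intro f g hf hg σ
      rw [rename_bracket, hf σ, hg σ]
end
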